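/- arXiv:math/0310115 — 7 statements merged into one kernel-verified Lean document; each statement's English description precedes it below -/
import Mathlib

section
/- Let X be a locally compact, second countable Hausdorff topological space and let R : C₀(X) → C₀(X) be a bounded linear map such that supp(Rf) ⊆ supp(f) for every f ∈ C_c(X). Then there exists a bounded continuous function k : X → ℂ with sup_{x∈X} |k(x)| ≤ ‖R‖ such that Rf = k·f (pointwise product) for every f ∈ C₀(X). -/
open ZeroAtInfty
open Set

lemma stmt0_aux_eps (a C : ℝ) (ha : 0 ≤ a) (h : ∀ ε > 0, a ≤ C * ε) : a = 0 := by
  rcases le_or_gt C 0 with hC | hC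
  · have := h 1 one_pos
    nlinarith
  · by_contra hne
    have hpos : 0 < a := lt_of_le_of_ne ha (Ne.symm hne)
    have := h (a / (2 * C)) (by positivity)
    have heq : C * a / (2 * C) = a / 2 := by
      field_simp
    rw [mul_div_assoc', heq] at this
    linarith

lemma stmt0_aux_sub {X : Type*} [TopologicalSpace X] {f g : X → ℂ}
    (hf : HasCompactSupport f) (hg : HasCompactSupport g) :
    HasCompactSupport (f - g) := by
  rw [sub_eq_add_neg]
  exact hf.add hg.neg

/-- Urysohn bump as an element of `C₀(X, ℂ)`. -/
lemma stmt0_aux_bump {X : Type*} [TopologicalSpace X] [LocallyCompactSpace X] [T2Space X]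
    (K : Set X) (hK : IsCompact K) (U : Set X) (hU : IsOpen U) (hKU : K ⊆ U) :
    ∃ G : C₀(X, ℂ), HasCompactSupport ⇑G ∧ EqOn ⇑G 1 K ∧ (∀ x, ‖G x‖ ≤ 1) ∧
      (∀ x ∉ U, G x = 0) ∧ (∀ x, ‖1 - G x‖ ≤ 1) := by
  obtain ⟨g, hg1, hg0, hgc, hg01⟩ :=
    exists_continuous_one_zero_of_isCompact hK hU.isClosed_compl
      (disjoint_compl_right_iff_subset.mpr hKU)
  refine ⟨⟨⟨fun x => (g x : ℂ), by continuity⟩, ?_⟩, ?_, ?_, ?_, ?_, ?_⟩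
  · exact (hgc.comp_left (g := (Complex.ofReal)) rfl).is_zero_at_infty
  · exact hgc.comp_left (g := (Complex.ofReal)) rfl
  · intro x hx; simp [hg1 hx]
  · intro x; simpa [Complex.norm_real, abs_le] using ⟨by linarith [(hg01 x).1], (hg01 x).2⟩
  · intro x hx; simpa using hg0 hx
  · intro x
    show ‖1 - ((g x : ℝ) : ℂ)‖ ≤ 1
    rw [show (1 : ℂ) - ((g x : ℝ) : ℂ) = (((1 - g x : ℝ)) : ℂ) by push_cast; ring]
    rw [Complex.norm_real, Real.norm_eq_abs, abs_le]
    constructor <;> [linarith [(hg01 x).2]; linarith [(hg01 x).1]]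

lemma stmt0_aux_normle {X : Type*} [TopologicalSpace X] (f : C₀(X, ℂ)) (C : ℝ) (hC : 0 ≤ C)
    (h : ∀ x, ‖f x‖ ≤ C) : ‖f‖ ≤ C := by
  rw [← ZeroAtInftyContinuousMap.norm_toBCF_eq_norm]
  exact (BoundedContinuousFunction.norm_le hC).mpr h

lemma stmt0_aux_apple {X : Type*} [TopologicalSpace X] (f : C₀(X, ℂ)) (x : X) :
    ‖f x‖ ≤ ‖f‖ := by
  rw [← ZeroAtInftyContinuousMap.norm_toBCF_eq_norm]
  exact f.toBCF.norm_coe_le_norm x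

lemma stmt0_aux_mapsub {X : Type*} [TopologicalSpace X]
    (R : C₀(X, ℂ) →L[ℂ] C₀(X, ℂ)) (f g : C₀(X, ℂ)) (x : X) :
    R f x - R g x = R (f - g) x := by
  rw [map_sub]
  simp [ZeroAtInftyContinuousMap.sub_apply]

/-- If a compactly supported `f` vanishes on a neighborhood of `x`, then `R f x = 0`. -/
lemma stmt0_aux_local {X : Type*} [TopologicalSpace X]
    (R : C₀(X, ℂ) →L[ℂ] C₀(X, ℂ))
    (hR : ∀ f : C₀(X, ℂ), HasCompactSupport ⇑f → tsupport ⇑(R f) ⊆ tsupport ⇑f)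
    (f : C₀(X, ℂ)) (hf : HasCompactSupport ⇑f) (x : X)
    (hx : ∀ᶠ y in nhds x, f y = 0) : R f x = 0 := by
  have hxs : x ∉ tsupport ⇑f := by
    rw [notMem_tsupport_iff_eventuallyEq]
    exact hx
  have : x ∉ tsupport ⇑(R f) := fun h => hxs (hR f hf h)
  exact image_eq_zero_of_notMem_tsupport this

/-- If a compactly supported `f` vanishes at `x`, then `R f x = 0`. -/
lemma stmt0_aux_point {X : Type*} [TopologicalSpace X] [LocallyCompactSpace X] [T2Space X]
    (R : C₀(X, ℂ) →L[ℂ] C₀(X, ℂ))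
    (hR : ∀ f : C₀(X, ℂ), HasCompactSupport ⇑f → tsupport ⇑(R f) ⊆ tsupport ⇑f)
    (f : C₀(X, ℂ)) (hf : HasCompactSupport ⇑f) (x : X)
    (hx : f x = 0) : R f x = 0 := by
  rw [← norm_eq_zero]
  apply stmt0_aux_eps _ ‖R‖ (norm_nonneg _)
  intro ε hε
  set U : Set X := {y | ‖f y‖ < ε} with hUdef
  have hU : IsOpen U := isOpen_lt (by continuity) continuous_const
  have hxU : x ∈ U := by simp [hUdef, hx, hε]
  obtain ⟨K, hKc, hxK, hKU⟩ := exists_compact_subset hU hxU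
  obtain ⟨G, hGc, hG1, hGle, hG0, _⟩ := stmt0_aux_bump K hKc U hU hKU
  have h1 : R (f - f * G) x = 0 := by
    apply stmt0_aux_local R hR _ ?_ x
    · filter_upwards [isOpen_interior.mem_nhds hxK] with y hy
      have hGy : G y = 1 := hG1 (interior_subset hy)
      rw [ZeroAtInftyContinuousMap.sub_apply, ZeroAtInftyContinuousMap.mul_apply, hGy,
        mul_one, sub_self]
    · rw [ZeroAtInftyContinuousMap.coe_sub]
      exact stmt0_aux_sub hf (by rw [ZeroAtInftyContinuousMap.coe_mul]; exact hGc.mul_left)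
  have h2 : R f x = R (f * G) x := by
    have := stmt0_aux_mapsub R f (f * G) x
    rw [h1] at this
    exact sub_eq_zero.mp this
  have hfG : ‖f * G‖ ≤ ε := by
    apply stmt0_aux_normle _ _ hε.le
    intro y
    rw [ZeroAtInftyContinuousMap.mul_apply, norm_mul]
    by_cases hy : y ∈ U
    · calc ‖f y‖ * ‖G y‖ ≤ ε * 1 :=
          mul_le_mul (le_of_lt hy) (hGle y) (norm_nonneg _) hε.le
      _ = ε := mul_one ε
    · rw [hG0 y hy]
      simpa using hε.le
  rw [h2]
  calc ‖R (f * G) x‖ ≤ ‖R (f * G)‖ := stmt0_aux_apple _ x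
    _ ≤ ‖R‖ * ‖f * G‖ := R.le_opNorm _
    _ ≤ ‖R‖ * ε := mul_le_mul_of_nonneg_left hfG (norm_nonneg R)


/-- Let `X` be a locally compact, second countable Hausdorff space and
`R : C₀(X) → C₀(X)` a bounded linear map such that `supp (R f) ⊆ supp f` for every
compactly supported `f`.  Then there is a bounded continuous function `k : X → ℂ`, with
`‖k x‖ ≤ ‖R‖` for all `x`, such that `R f = k • f` pointwise for every `f ∈ C₀(X)`. -/
theorem stmt0 {X : Type*} [TopologicalSpace X] [LocallyCompactSpace X]
    [SecondCountableTopology X] [T2Space X]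
    (R : C₀(X, ℂ) →L[ℂ] C₀(X, ℂ))
    (hR : ∀ f : C₀(X, ℂ), HasCompactSupport ⇑f → tsupport ⇑(R f) ⊆ tsupport ⇑f) :
    ∃ k : X → ℂ, Continuous k ∧ (∀ x, ‖k x‖ ≤ ‖R‖) ∧
      ∀ f : C₀(X, ℂ), ∀ x, R f x = k x * f x := by
  have bump : ∀ x : X, ∃ p : C₀(X, ℂ) × Set X,
      HasCompactSupport ⇑p.1 ∧ IsOpen p.2 ∧ x ∈ p.2 ∧ EqOn ⇑p.1 1 p.2 ∧
      (∀ y, ‖p.1 y‖ ≤ 1) := by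
    intro x
    obtain ⟨K, hKc, hxK, _⟩ := exists_compact_subset isOpen_univ (mem_univ x)
    obtain ⟨G, hGc, hG1, hGle, _, _⟩ := stmt0_aux_bump K hKc univ isOpen_univ (subset_univ K)
    exact ⟨⟨G, interior K⟩, hGc, isOpen_interior, hxK,
      fun y hy => hG1 (interior_subset hy), hGle⟩
  choose P hPc hPo hPx hP1 hPle using bump
  set k : X → ℂ := fun x => R (P x).1 x with hk
  -- well-definedness
  have wd : ∀ (x : X) (G : C₀(X, ℂ)), HasCompactSupport ⇑G →
      (∀ᶠ y in nhds x, G y = 1) → R G x = k x := by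
    intro x G hGc hG1
    have hdiff : R (G - (P x).1) x = 0 := by
      apply stmt0_aux_local R hR _ ?_ x
      · filter_upwards [hG1, (hPo x).mem_nhds (hPx x)] with y h1 h2
        have h3 : (P x).1 y = 1 := hP1 x h2
        rw [ZeroAtInftyContinuousMap.sub_apply, h1, h3, sub_self]
      · rw [ZeroAtInftyContinuousMap.coe_sub]
        exact stmt0_aux_sub hGc (hPc x)
    have := stmt0_aux_mapsub R G (P x).1 x
    rw [hdiff] at this
    exact sub_eq_zero.mp this
  -- key identity for compactly supported f
  have keyc : ∀ (f : C₀(X, ℂ)), HasCompactSupport ⇑f → ∀ x, R f x = k x * f x := by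
    intro f hf x
    have hzero : R (f - f x • (P x).1) x = 0 := by
      apply stmt0_aux_point R hR _ ?_ x
      · rw [ZeroAtInftyContinuousMap.sub_apply, ZeroAtInftyContinuousMap.smul_apply,
          hP1 x (hPx x)]
        simp
      · rw [ZeroAtInftyContinuousMap.coe_sub]
        refine stmt0_aux_sub hf ?_
        rw [ZeroAtInftyContinuousMap.coe_smul]
        exact (hPc x).smul_left (f := fun _ => f x)
    have := stmt0_aux_mapsub R f (f x • (P x).1) x
    rw [hzero] at this
    have h4 := sub_eq_zero.mp this
    rw [h4, R.map_smul, ZeroAtInftyContinuousMap.smul_apply]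
    rw [hk]
    simp [smul_eq_mul, mul_comm]
  refine ⟨k, ?_, ?_, ?_⟩
  · rw [continuous_iff_continuousAt]
    intro x
    have hloc : ∀ᶠ y in nhds x, k y = R (P x).1 y := by
      filter_upwards [(hPo x).mem_nhds (hPx x)] with y hy
      refine (wd y (P x).1 (hPc x) ?_).symm
      filter_upwards [(hPo x).mem_nhds hy] with z hz
      exact hP1 x hz
    exact ((map_continuous (R (P x).1)).continuousAt).congr
      (hloc.mono fun y hy => hy.symm)
  · intro x
    calc ‖k x‖ = ‖R (P x).1 x‖ := rfl
      _ ≤ ‖R (P x).1‖ := stmt0_aux_apple _ x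
      _ ≤ ‖R‖ * ‖(P x).1‖ := R.le_opNorm _
      _ ≤ ‖R‖ * 1 := mul_le_mul_of_nonneg_left
          (stmt0_aux_normle _ _ zero_le_one (hPle x)) (norm_nonneg R)
      _ = ‖R‖ := mul_one _
  · intro f x
    rw [← sub_eq_zero, ← norm_eq_zero]
    apply stmt0_aux_eps _ (2 * ‖R‖) (norm_nonneg _)
    intro ε hε
    have hcpt : ∀ᶠ y in Filter.cocompact X, ‖f y‖ < ε := by
      have := Metric.tendsto_nhds.mp (zero_at_infty f) ε hε
      filter_upwards [this] with y hy
      simpa [dist_zero_right] using hy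
    obtain ⟨K, hKc, hKsub⟩ := Filter.mem_cocompact.mp hcpt
    obtain ⟨G, hGc, hG1, hGle, _, hG1le⟩ :=
      stmt0_aux_bump K hKc univ isOpen_univ (subset_univ K)
    have hfGc : HasCompactSupport ⇑(f * G) := by
      rw [ZeroAtInftyContinuousMap.coe_mul]
      exact hGc.mul_left
    have hsmall : ‖f - f * G‖ ≤ ε := by
      apply stmt0_aux_normle _ _ hε.le
      intro y
      rw [ZeroAtInftyContinuousMap.sub_apply, ZeroAtInftyContinuousMap.mul_apply]
      by_cases hy : y ∈ K
      · have h3 : G y = 1 := hG1 hy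
        rw [h3, mul_one, sub_self]
        simpa using hε.le
      · have hfy : ‖f y‖ < ε := hKsub hy
        calc ‖f y - f y * G y‖ = ‖f y‖ * ‖1 - G y‖ := by
              rw [← norm_mul]; ring_nf
        _ ≤ ε * 1 := mul_le_mul hfy.le (hG1le y) (norm_nonneg _) hε.le
        _ = ε := mul_one ε
    have hterm1 : ‖R f x - R (f * G) x‖ ≤ ‖R‖ * ε := by
      rw [stmt0_aux_mapsub]
      calc ‖R (f - f * G) x‖ ≤ ‖R (f - f * G)‖ := stmt0_aux_apple _ x
        _ ≤ ‖R‖ * ‖f - f * G‖ := R.le_opNorm _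
        _ ≤ ‖R‖ * ε := mul_le_mul_of_nonneg_left hsmall (norm_nonneg R)
    have hkx : ‖k x‖ ≤ ‖R‖ := by
      calc ‖k x‖ = ‖R (P x).1 x‖ := rfl
        _ ≤ ‖R (P x).1‖ := stmt0_aux_apple _ x
        _ ≤ ‖R‖ * ‖(P x).1‖ := R.le_opNorm _
        _ ≤ ‖R‖ * 1 := mul_le_mul_of_nonneg_left
            (stmt0_aux_normle _ _ zero_le_one (hPle x)) (norm_nonneg R)
        _ = ‖R‖ := mul_one _
    have hterm2 : ‖R (f * G) x - k x * f x‖ ≤ ‖R‖ * ε := by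
      rw [keyc (f * G) hfGc x, ZeroAtInftyContinuousMap.mul_apply]
      calc ‖k x * (f x * G x) - k x * f x‖ = ‖k x‖ * ‖f x * G x - f x‖ := by
            rw [← norm_mul]; ring_nf
      _ ≤ ‖R‖ * ε := by
          apply mul_le_mul hkx ?_ (norm_nonneg _) (norm_nonneg R)
          have : f x * G x - f x = -(f x - f x * G x) := by ring
          rw [this, norm_neg]
          calc ‖f x - f x * G x‖ = ‖(f - f * G) x‖ := by
                rw [ZeroAtInftyContinuousMap.sub_apply, ZeroAtInftyContinuousMap.mul_apply]
          _ ≤ ‖f - f * G‖ := stmt0_aux_apple _ x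
          _ ≤ ε := hsmall
    calc ‖R f x - k x * f x‖
        ≤ ‖R f x - R (f * G) x‖ + ‖R (f * G) x - k x * f x‖ := norm_sub_le_norm_sub_add_norm_sub _ _ _
      _ ≤ ‖R‖ * ε + ‖R‖ * ε := add_le_add hterm1 hterm2
      _ = 2 * ‖R‖ * ε := by ring
end

section
/- Let X be a locally compact, second countable Hausdorff topological space and let R : C₀(X) → C₀(X) be a bounded linear map such that supp(Rf) ⊆ supp(f) for every f ∈ C_c(X). If g ∈ C_c(X) and x₀ ∈ X satisfy g(x₀) = 0, then (Rg)(x₀) = 0. -/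
open ZeroAtInfty

/-- Let `X` be a locally compact, second countable Hausdorff space and
`R : C₀(X) → C₀(X)` a bounded linear map such that `supp (R f) ⊆ supp f` for every
compactly supported `f`.  If `g` is compactly supported and `g x₀ = 0`, then `R g x₀ = 0`. -/
theorem stmt1 {X : Type*} [TopologicalSpace X] [LocallyCompactSpace X]
    [SecondCountableTopology X] [T2Space X]
    (R : C₀(X, ℂ) →L[ℂ] C₀(X, ℂ))
    (hR : ∀ f : C₀(X, ℂ), HasCompactSupport ⇑f → tsupport ⇑(R f) ⊆ tsupport ⇑f)
    (g : C₀(X, ℂ)) (hg : HasCompactSupport ⇑g) (x₀ : X) (hg0 : g x₀ = 0) :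
    R g x₀ = 0 := by
  rw [← norm_le_zero_iff]
  refine le_of_forall_pos_le_add (fun ε hε => ?_)
  rw [zero_add]
  -- shrink ε
  set δ : ℝ := ε / (‖R‖ + 1) with hδdef
  have hRpos : (0:ℝ) < ‖R‖ + 1 := by positivity
  have hδ : 0 < δ := div_pos hε hRpos
  -- the open set where ‖g‖ < δ
  set U : Set X := {x | ‖g x‖ < δ} with hUdef
  have hUopen : IsOpen U := isOpen_lt (by fun_prop) continuous_const
  have hx₀U : x₀ ∈ U := by simp [hUdef, hg0, hδ]
  obtain ⟨K, hKcomp, hx₀K, hKU⟩ := exists_compact_subset hUopen hx₀U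
  -- Urysohn function
  obtain ⟨φ, hφ1, hφ0, hφcs, hφ01⟩ :=
    exists_continuous_one_zero_of_isCompact hKcomp hUopen.isClosed_compl
      (Set.disjoint_compl_right_iff_subset.mpr hKU)
  -- h = φ • g as an element of C₀
  have hbound : ∀ x, ‖(φ x : ℂ) * g x‖ ≤ ‖g x‖ := by
    intro x
    rw [norm_mul]
    have h1 : ‖(φ x : ℂ)‖ ≤ 1 := by
      rw [Complex.norm_real, Real.norm_eq_abs, abs_le]
      exact ⟨by linarith [(hφ01 x).1], (hφ01 x).2⟩
    calc ‖(φ x : ℂ)‖ * ‖g x‖ ≤ 1 * ‖g x‖ :=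
          mul_le_mul_of_nonneg_right h1 (norm_nonneg _)
      _ = ‖g x‖ := one_mul _
  set h : C₀(X, ℂ) :=
    ⟨⟨fun x => (φ x : ℂ) * g x, by fun_prop⟩, by
      refine squeeze_zero_norm hbound ?_
      simpa using (zero_at_infty g).norm⟩ with hhdef
  have hcoe : ∀ x, h x = (φ x : ℂ) * g x := fun x => rfl
  -- g - h vanishes near x₀ and has compact support
  have hsub : Function.support ⇑(g - h) ⊆ tsupport ⇑g := by
    intro x hx
    apply subset_tsupport
    intro hgx
    apply hx
    simp [hcoe, hgx]
  have hcs : HasCompactSupport ⇑(g - h) :=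
    HasCompactSupport.of_support_subset_isCompact hg hsub
  have hx₀not : x₀ ∉ tsupport ⇑(g - h) := by
    have hzero : Set.EqOn ⇑(g - h) 0 (interior K) := by
      intro x hx
      have : φ x = 1 := hφ1 (interior_subset hx)
      simp [hcoe, this]
    exact notMem_tsupport_iff_eventuallyEq.mpr
      (Filter.eventuallyEq_of_mem (isOpen_interior.mem_nhds hx₀K) hzero)
  have hR0 : R (g - h) x₀ = 0 := by
    have := hR (g - h) hcs
    exact image_eq_zero_of_notMem_tsupport (fun hmem => hx₀not (this hmem))
  -- bound ‖h‖ ≤ δ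
  have hhnorm : ‖h‖ ≤ δ := by
    rw [← ZeroAtInftyContinuousMap.norm_toBCF_eq_norm]
    rw [BoundedContinuousFunction.norm_le hδ.le]
    intro x
    show ‖h x‖ ≤ δ
    by_cases hxU : x ∈ U
    · exact (hbound x).trans hxU.le
    · have : φ x = 0 := hφ0 hxU
      simp [hcoe, this, hδ.le]
  -- conclude
  have hdecomp : R g x₀ = R h x₀ + R (g - h) x₀ := by
    have : g = h + (g - h) := by abel
    rw [this]
    simp
  rw [hdecomp, hR0, add_zero]
  calc ‖R h x₀‖ ≤ ‖R h‖ := by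
        rw [← ZeroAtInftyContinuousMap.norm_toBCF_eq_norm]
        exact (R h).toBCF.norm_coe_le_norm x₀
    _ ≤ ‖R‖ * ‖h‖ := R.le_opNorm h
    _ ≤ ‖R‖ * δ := mul_le_mul_of_nonneg_left hhnorm (norm_nonneg R)
    _ ≤ (‖R‖ + 1) * δ := by nlinarith [hδ.le]
    _ = ε := by rw [hδdef]; field_simp [hRpos.ne']
end

section
/- The family 𝔅 is a basis for a topology on H. With this topology, H is a locally compact, second countable Hausdorff space; the extended map r̃ : H → X is continuous and open; the copy of G inside H is an open subset whose subspace topology is the original topology of G; and the map X → H sending u to ∞^u is continuous. -/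
open TopologicalSpace

variable {G X : Type*}

/-- The extension of `r : G → X` to the disjoint union `H = G ⊔ X`, where the point of `H`
corresponding to `u ∈ X` (written `∞^u` in the paper) is `Sum.inr u`. -/
def rTilde (r : G → X) : G ⊕ X → X := Sum.elim r id

/-- The family `𝔅` of subsets of `H = G ⊔ X`: open subsets `U` of `G`, together with sets of
the form `r̃⁻¹(W) \ C` with `W ⊆ X` open and `C ⊆ G` compact. -/
def hBasis [TopologicalSpace G] [TopologicalSpace X] (r : G → X) : Set (Set (G ⊕ X)) :=
  {S | (∃ U : Set G, IsOpen U ∧ S = Sum.inl '' U) ∨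
       (∃ (W : Set X) (C : Set G), IsOpen W ∧ IsCompact C ∧
          S = rTilde r ⁻¹' W \ (Sum.inl '' C))}

/-- The topology on `H = G ⊔ X` generated by the family `𝔅`. -/
def hTop [TopologicalSpace G] [TopologicalSpace X] (r : G → X) : TopologicalSpace (G ⊕ X) :=
  generateFrom (hBasis r)

@[simp] lemma rTilde_inl (r : G → X) (g : G) : rTilde r (Sum.inl g) = r g := rfl

@[simp] lemma rTilde_inr (r : G → X) (u : X) : rTilde r (Sum.inr u) = u := rfl

/-- `𝔅` is a basis for the topology it generates on `H`; with this topology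
`H` is locally compact, second countable and Hausdorff; `r̃ : H → X` is continuous and open;
the copy of `G` inside `H` is open with its original topology (i.e. `Sum.inl` is an open
embedding); and `u ↦ ∞^u` is continuous. -/
theorem stmt2 [TopologicalSpace G] [TopologicalSpace X]
    [LocallyCompactSpace G] [SecondCountableTopology G] [T2Space G]
    [LocallyCompactSpace X] [SecondCountableTopology X] [T2Space X]
    (r : G → X) (hr_cont : Continuous r) (hr_open : IsOpenMap r)
    (hr_surj : Function.Surjective r) :
    @IsTopologicalBasis (G ⊕ X) (hTop r) (hBasis r) ∧
    @LocallyCompactSpace (G ⊕ X) (hTop r) ∧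
    @SecondCountableTopology (G ⊕ X) (hTop r) ∧
    @T2Space (G ⊕ X) (hTop r) ∧
    @Continuous (G ⊕ X) X (hTop r) _ (rTilde r) ∧
    @IsOpenMap (G ⊕ X) X (hTop r) _ (rTilde r) ∧
    @Topology.IsOpenEmbedding G (G ⊕ X) _ (hTop r) Sum.inl ∧
    @Continuous X (G ⊕ X) _ (hTop r) Sum.inr := by
  letI : TopologicalSpace (G ⊕ X) := hTop r
  -- basic sets are open
  have hopen : ∀ S ∈ hBasis r, IsOpen S := fun S hS => isOpen_generateFrom_of_mem hS
  have hInlOpen : ∀ U : Set G, IsOpen U → IsOpen (Sum.inl '' U : Set (G ⊕ X)) :=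
    fun U hU => hopen _ (Or.inl ⟨U, hU, rfl⟩)
  have hWCopen : ∀ (W : Set X) (C : Set G), IsOpen W → IsCompact C →
      IsOpen (rTilde r ⁻¹' W \ (Sum.inl '' C)) :=
    fun W C hW hC => hopen _ (Or.inr ⟨W, C, hW, hC, rfl⟩)
  -- membership helpers
  have hmem_inl : ∀ (U : Set G) (g : G), (Sum.inl g : G ⊕ X) ∈ Sum.inl '' U ↔ g ∈ U := by
    intro U g; simp [Sum.inl.injEq]
  have hmem_inr : ∀ (U : Set G) (u : X), (Sum.inr u : G ⊕ X) ∉ Sum.inl '' U := by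
    intro U u h; simp at h
  -- 𝔅 is a topological basis
  have hbasis : IsTopologicalBasis (hBasis r) := by
    refine ⟨?_, ?_, rfl⟩
    · rintro t₁ (⟨U, hU, rfl⟩ | ⟨W, C, hW, hC, rfl⟩) t₂
        (⟨V, hV, rfl⟩ | ⟨W', C', hW', hC', rfl⟩) x hx
      · refine ⟨Sum.inl '' (U ∩ V), Or.inl ⟨U ∩ V, hU.inter hV, rfl⟩, ?_, ?_⟩
        · obtain ⟨⟨g, hg, rfl⟩, h2⟩ := hx
          exact ⟨g, ⟨hg, (hmem_inl V g).1 h2⟩, rfl⟩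
        · rintro y ⟨g, ⟨hg1, hg2⟩, rfl⟩; exact ⟨⟨g, hg1, rfl⟩, ⟨g, hg2, rfl⟩⟩
      · refine ⟨Sum.inl '' (U ∩ (r ⁻¹' W' \ C')), Or.inl
          ⟨_, hU.inter ((hr_cont.isOpen_preimage _ hW').sdiff hC'.isClosed), rfl⟩, ?_, ?_⟩
        · obtain ⟨⟨g, hg, rfl⟩, hg2, hg3⟩ := hx
          exact ⟨g, ⟨hg, hg2, fun hc => hg3 ⟨g, hc, rfl⟩⟩, rfl⟩
        · rintro y ⟨g, ⟨hg1, hg2, hg3⟩, rfl⟩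
          exact ⟨⟨g, hg1, rfl⟩, hg2, fun hc => hg3 ((hmem_inl C' g).1 hc)⟩
      · refine ⟨Sum.inl '' ((r ⁻¹' W \ C) ∩ V), Or.inl
          ⟨_, ((hr_cont.isOpen_preimage _ hW).sdiff hC.isClosed).inter hV, rfl⟩, ?_, ?_⟩
        · obtain ⟨⟨hg2, hg3⟩, g, hg, rfl⟩ := hx
          exact ⟨g, ⟨⟨hg2, fun hc => hg3 ⟨g, hc, rfl⟩⟩, hg⟩, rfl⟩
        · rintro y ⟨g, ⟨⟨hg2, hg3⟩, hg1⟩, rfl⟩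
          exact ⟨⟨hg2, fun hc => hg3 ((hmem_inl C g).1 hc)⟩, ⟨g, hg1, rfl⟩⟩
      · refine ⟨rTilde r ⁻¹' (W ∩ W') \ Sum.inl '' (C ∪ C'), Or.inr
          ⟨W ∩ W', C ∪ C', hW.inter hW', hC.union hC', rfl⟩, ?_, ?_⟩
        · obtain ⟨⟨h1, h2⟩, h3, h4⟩ := hx
          refine ⟨⟨h1, h3⟩, ?_⟩
          rintro ⟨g, (hg | hg), rfl⟩
          exacts [h2 ⟨g, hg, rfl⟩, h4 ⟨g, hg, rfl⟩]
        · rintro y ⟨⟨h1, h2⟩, h3⟩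
          exact ⟨⟨h1, fun ⟨g, hg, he⟩ => h3 ⟨g, Or.inl hg, he⟩⟩,
                 ⟨h2, fun ⟨g, hg, he⟩ => h3 ⟨g, Or.inr hg, he⟩⟩⟩
    · apply Set.eq_univ_of_univ_subset
      intro x _
      refine Set.mem_sUnion.2 ⟨rTilde r ⁻¹' Set.univ \ Sum.inl '' (∅ : Set G),
        Or.inr ⟨Set.univ, ∅, isOpen_univ, isCompact_empty, rfl⟩, ?_⟩
      simp
  -- r̃ is continuous
  have cont_rTilde : Continuous (rTilde r) := by
    rw [continuous_def]
    intro W hW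
    have : rTilde r ⁻¹' W = rTilde r ⁻¹' W \ Sum.inl '' (∅ : Set G) := by simp
    rw [this]
    exact hWCopen _ _ hW isCompact_empty
  -- inl is continuous
  have cont_inl : Continuous (Sum.inl : G → G ⊕ X) := by
    apply continuous_generateFrom_iff.2
    rintro S (⟨U, hU, rfl⟩ | ⟨W, C, hW, hC, rfl⟩)
    · rwa [Set.preimage_image_eq _ Sum.inl_injective]
    · have : Sum.inl ⁻¹' (rTilde r ⁻¹' W \ Sum.inl '' C) = r ⁻¹' W \ C := by
        ext g; simp [Sum.inl.injEq]
      rw [this]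
      exact (hr_cont.isOpen_preimage _ hW).sdiff hC.isClosed
  -- inr is continuous
  have cont_inr : Continuous (Sum.inr : X → G ⊕ X) := by
    apply continuous_generateFrom_iff.2
    rintro S (⟨U, hU, rfl⟩ | ⟨W, C, hW, hC, rfl⟩)
    · have : Sum.inr ⁻¹' (Sum.inl '' U : Set (G ⊕ X)) = ∅ := by ext u; simp
      rw [this]; exact isOpen_empty
    · have : Sum.inr ⁻¹' (rTilde r ⁻¹' W \ Sum.inl '' C) = W := by ext u; simp
      rw [this]; exact hW
  -- inl is an open map, hence an open embedding
  have inl_openMap : IsOpenMap (Sum.inl : G → G ⊕ X) := fun U hU => hInlOpen U hU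
  have openEmb : Topology.IsOpenEmbedding (Sum.inl : G → G ⊕ X) :=
    Topology.IsOpenEmbedding.of_continuous_injective_isOpenMap cont_inl
      Sum.inl_injective inl_openMap
  -- r̃ is an open map
  have openMap : IsOpenMap (rTilde r) := by
    rw [hbasis.isOpenMap_iff]
    rintro S (⟨U, hU, rfl⟩ | ⟨W, C, hW, hC, rfl⟩)
    · have : rTilde r '' (Sum.inl '' U) = r '' U := by
        rw [Set.image_image]; rfl
      rw [this]; exact hr_open U hU
    · have : rTilde r '' (rTilde r ⁻¹' W \ Sum.inl '' C) = W := by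
        apply Set.Subset.antisymm
        · rintro _ ⟨x, ⟨hx, _⟩, rfl⟩; exact hx
        · intro u hu
          exact ⟨Sum.inr u, ⟨hu, hmem_inr C u⟩, rfl⟩
      rw [this]; exact hW
  -- Hausdorff
  have ht2 : T2Space (G ⊕ X) := by
    constructor
    rintro (g | u) (g' | u') hne
    · obtain ⟨U, V, hU, hV, hgU, hgV, hdis⟩ :=
        t2_separation (fun h => hne (by rw [h]) : g ≠ g')
      refine ⟨Sum.inl '' U, Sum.inl '' V, hInlOpen U hU, hInlOpen V hV,
        ⟨g, hgU, rfl⟩, ⟨g', hgV, rfl⟩, ?_⟩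
      rw [Set.disjoint_left]
      rintro _ ⟨a, ha, rfl⟩ ⟨b, hb, he⟩
      rw [Sum.inl.injEq] at he
      exact Set.disjoint_left.1 hdis ha (he ▸ hb)
    · -- inl g vs inr u'
      obtain ⟨K, hKc, hKn⟩ := exists_compact_mem_nhds g
      obtain ⟨U, hUK, hU, hgU⟩ := mem_nhds_iff.1 hKn
      refine ⟨Sum.inl '' U, rTilde r ⁻¹' Set.univ \ Sum.inl '' K,
        hInlOpen U hU, hWCopen _ _ isOpen_univ hKc, ⟨g, hgU, rfl⟩,
        ⟨Set.mem_univ _, hmem_inr K u'⟩, ?_⟩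
      rw [Set.disjoint_left]
      rintro _ ⟨a, ha, rfl⟩ ⟨_, hb⟩
      exact hb ⟨a, hUK ha, rfl⟩
    · -- inr u vs inl g'
      obtain ⟨K, hKc, hKn⟩ := exists_compact_mem_nhds g'
      obtain ⟨U, hUK, hU, hgU⟩ := mem_nhds_iff.1 hKn
      refine ⟨rTilde r ⁻¹' Set.univ \ Sum.inl '' K, Sum.inl '' U,
        hWCopen _ _ isOpen_univ hKc, hInlOpen U hU,
        ⟨Set.mem_univ _, hmem_inr K u⟩, ⟨g', hgU, rfl⟩, ?_⟩
      rw [Set.disjoint_right]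
      rintro _ ⟨a, ha, rfl⟩ ⟨_, hb⟩
      exact hb ⟨a, hUK ha, rfl⟩
    · obtain ⟨W, W', hW, hW', huW, huW', hdis⟩ :=
        t2_separation (fun h => hne (by rw [h]) : u ≠ u')
      refine ⟨rTilde r ⁻¹' W \ Sum.inl '' (∅ : Set G),
        rTilde r ⁻¹' W' \ Sum.inl '' (∅ : Set G),
        hWCopen _ _ hW isCompact_empty, hWCopen _ _ hW' isCompact_empty,
        ⟨huW, by simp⟩, ⟨huW', by simp⟩, ?_⟩
      rw [Set.disjoint_left]
      rintro x ⟨hx, -⟩ ⟨hx', -⟩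
      exact Set.disjoint_left.1 hdis hx hx'
  -- key compactness: preimages of compact sets under r̃ are compact
  have key_compact : ∀ L : Set X, IsCompact L → IsCompact (rTilde r ⁻¹' L) := by
    intro L hL
    refine isCompact_of_finite_subcover fun {ι} U hU hcov => ?_
    have hchoice : ∀ v ∈ L, ∃ (i : ι) (W : Set X) (C : Set G),
        IsOpen W ∧ IsCompact C ∧ v ∈ W ∧
          rTilde r ⁻¹' W \ (Sum.inl '' C) ⊆ U i := by
      intro v hv
      have hmem : (Sum.inr v : G ⊕ X) ∈ ⋃ i, U i := hcov (by simpa using hv)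
      obtain ⟨i, hi⟩ := Set.mem_iUnion.mp hmem
      obtain ⟨S, hS, hxS, hSU⟩ := hbasis.exists_subset_of_mem_open hi (hU i)
      rcases hS with ⟨V, hV, rfl⟩ | ⟨W, C, hW, hC, rfl⟩
      · exact absurd hxS (hmem_inr V v)
      · exact ⟨i, W, C, hW, hC, by simpa using hxS.1, hSU⟩
    choose i W C hW hC hvW hsub using hchoice
    have hLcov : L ⊆ ⋃ v : L, W v v.2 :=
      fun x hx => Set.mem_iUnion.mpr ⟨⟨x, hx⟩, hvW x hx⟩
    obtain ⟨s, hs⟩ := hL.elim_finite_subcover (fun v : L => W v v.2)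
      (fun v => hW v v.2) hLcov
    set C₀ : Set G := ⋃ v ∈ s, C v v.2 with hC₀def
    have hC₀ : IsCompact C₀ := s.finite_toSet.isCompact_biUnion fun v _ => hC v v.2
    have hclosed : IsClosed (rTilde r ⁻¹' L) :=
      IsClosed.preimage cont_rTilde hL.isClosed
    have hK2 : IsCompact (Sum.inl '' C₀ ∩ rTilde r ⁻¹' L) :=
      ((hC₀.image cont_inl).inter_right hclosed)
    obtain ⟨t, ht⟩ := hK2.elim_finite_subcover U hU
      (fun x hx => hcov hx.2)
    classical
    refine ⟨t ∪ s.image (fun v => i v.1 v.2), fun x hx => ?_⟩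
    have hxL : rTilde r x ∈ L := hx
    obtain ⟨v, hvs, hxW⟩ := Set.mem_iUnion₂.1 (hs hxL)
    by_cases hxC : x ∈ Sum.inl '' C₀
    · obtain ⟨j, hjt, hj⟩ := Set.mem_iUnion₂.1 (ht ⟨hxC, hx⟩)
      exact Set.mem_iUnion₂.2 ⟨j, Finset.mem_union_left _ hjt, hj⟩
    · have hxCv : x ∉ Sum.inl '' C v v.2 := fun h =>
        hxC (by
          obtain ⟨g, hg, rfl⟩ := h
          exact ⟨g, Set.mem_biUnion hvs hg, rfl⟩)
      refine Set.mem_iUnion₂.2 ⟨i v v.2, Finset.mem_union_right _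
        (Finset.mem_image.2 ⟨v, hvs, rfl⟩), hsub v v.2 ⟨hxW, hxCv⟩⟩
  -- locally compact
  have hlc : LocallyCompactSpace (G ⊕ X) := by
    constructor
    intro x n hn
    obtain ⟨O, hOn, hO, hxO⟩ := mem_nhds_iff.1 hn
    obtain ⟨S, hS, hxS, hSO⟩ := hbasis.exists_subset_of_mem_open hxO hO
    rcases hS with ⟨V, hV, rfl⟩ | ⟨W, C, hW, hC, rfl⟩
    · obtain ⟨g, hg, rfl⟩ := hxS
      obtain ⟨K, hKn, hKV, hKc⟩ :=
        LocallyCompactSpace.local_compact_nhds g V (hV.mem_nhds hg)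
      refine ⟨Sum.inl '' K, ?_, fun y hy => hOn (hSO (Set.image_mono (f := Sum.inl) hKV hy)),
        hKc.image cont_inl⟩
      obtain ⟨U', hU'K, hU', hgU'⟩ := mem_nhds_iff.1 hKn
      exact mem_nhds_iff.2 ⟨Sum.inl '' U', Set.image_mono (f := Sum.inl) hU'K,
        hInlOpen U' hU', ⟨g, hgU', rfl⟩⟩
    · rcases x with g | u
      · have hg : g ∈ r ⁻¹' W \ C :=
          ⟨hxS.1, fun hc => hxS.2 ⟨g, hc, rfl⟩⟩
        have hVo : IsOpen (r ⁻¹' W \ C) :=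
          (hr_cont.isOpen_preimage _ hW).sdiff hC.isClosed
        obtain ⟨K, hKn, hKV, hKc⟩ :=
          LocallyCompactSpace.local_compact_nhds g _ (hVo.mem_nhds hg)
        refine ⟨Sum.inl '' K, ?_, ?_, hKc.image cont_inl⟩
        · obtain ⟨U', hU'K, hU', hgU'⟩ := mem_nhds_iff.1 hKn
          exact mem_nhds_iff.2 ⟨Sum.inl '' U', Set.image_mono (f := Sum.inl) hU'K,
            hInlOpen U' hU', ⟨g, hgU', rfl⟩⟩
        · rintro _ ⟨a, ha, rfl⟩
          exact hOn (hSO ⟨(hKV ha).1, fun ⟨b, hb, he⟩ =>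
            (hKV ha).2 ((Sum.inl_injective he) ▸ hb)⟩)
      · have huW : u ∈ W := hxS.1
        obtain ⟨L, hLn, hLW, hLc⟩ :=
          LocallyCompactSpace.local_compact_nhds u W (hW.mem_nhds huW)
        obtain ⟨C', hC'c, hCC'⟩ := exists_compact_superset hC
        refine ⟨rTilde r ⁻¹' L \ Sum.inl '' interior C', ?_, ?_, ?_⟩
        · refine mem_nhds_iff.2 ⟨rTilde r ⁻¹' interior L \ Sum.inl '' C',
            ?_, hWCopen _ _ isOpen_interior hC'c, ?_⟩
          · rintro y ⟨hy1, hy2⟩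
            exact ⟨(interior_subset : interior L ⊆ L) hy1, fun ⟨g, hg, he⟩ =>
              hy2 ⟨g, interior_subset hg, he⟩⟩
          · exact ⟨by simpa using mem_interior_iff_mem_nhds.2 hLn,
              hmem_inr C' u⟩
        · rintro y ⟨hy1, hy2⟩
          exact hOn (hSO ⟨hLW hy1, fun ⟨g, hg, he⟩ => hy2 ⟨g, hCC' hg, he⟩⟩)
        · exact (key_compact L hLc).diff (hInlOpen _ isOpen_interior)
  -- second countable
  have hsc : SecondCountableTopology (G ⊕ X) := by
    obtain ⟨bG, hbGc, -, hbG⟩ := exists_countable_basis G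
    obtain ⟨bX, hbXc, -, hbX⟩ := exists_countable_basis X
    let K : CompactExhaustion G := CompactExhaustion.choice G
    let B : Set (Set (G ⊕ X)) :=
      ((fun U => Sum.inl '' U) '' bG) ∪
        ((fun p : Set X × ℕ => rTilde r ⁻¹' p.1 \ Sum.inl '' K p.2) ''
          (bX ×ˢ (Set.univ : Set ℕ)))
    have hBc : B.Countable :=
      (hbGc.image _).union ((hbXc.prod (Set.countable_univ)).image _)
    have hBbasis : IsTopologicalBasis B := by
      apply isTopologicalBasis_of_isOpen_of_nhds
      · rintro S (⟨U, hU, rfl⟩ | ⟨⟨W, n⟩, ⟨hW, -⟩, rfl⟩)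
        · exact hInlOpen U (hbG.isOpen hU)
        · exact hWCopen _ _ (hbX.isOpen hW) (K.isCompact n)
      · intro a u hau hu
        obtain ⟨S, hS, haS, hSu⟩ := hbasis.exists_subset_of_mem_open hau hu
        rcases hS with ⟨V, hV, rfl⟩ | ⟨W, C, hW, hC, rfl⟩
        · obtain ⟨g, hg, rfl⟩ := haS
          obtain ⟨U, hUb, hgU, hUV⟩ := hbG.exists_subset_of_mem_open hg hV
          exact ⟨Sum.inl '' U, Or.inl ⟨U, hUb, rfl⟩, ⟨g, hgU, rfl⟩,
            (Set.image_mono (f := Sum.inl) hUV).trans hSu⟩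
        · rcases a with g | v
          · have hg : g ∈ r ⁻¹' W \ C :=
              ⟨haS.1, fun hc => haS.2 ⟨g, hc, rfl⟩⟩
            have hVo : IsOpen (r ⁻¹' W \ C) :=
              (hr_cont.isOpen_preimage _ hW).sdiff hC.isClosed
            obtain ⟨U, hUb, hgU, hUV⟩ := hbG.exists_subset_of_mem_open hg hVo
            refine ⟨Sum.inl '' U, Or.inl ⟨U, hUb, rfl⟩, ⟨g, hgU, rfl⟩, ?_⟩
            rintro _ ⟨a, ha, rfl⟩
            exact hSu ⟨(hUV ha).1, fun ⟨b, hb, he⟩ =>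
              (hUV ha).2 ((Sum.inl_injective he) ▸ hb)⟩
          · have hvW : v ∈ W := haS.1
            obtain ⟨W', hW'b, hvW', hW'W⟩ := hbX.exists_subset_of_mem_open hvW hW
            obtain ⟨n, hn⟩ := K.exists_superset_of_isCompact hC
            refine ⟨rTilde r ⁻¹' W' \ Sum.inl '' K n,
              Or.inr ⟨⟨W', n⟩, ⟨hW'b, Set.mem_univ n⟩, rfl⟩,
              ⟨by simpa using hvW', hmem_inr _ v⟩, ?_⟩
            rintro y ⟨hy1, hy2⟩
            exact hSu ⟨hW'W hy1, fun ⟨g, hg, he⟩ => hy2 ⟨g, hn hg, he⟩⟩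
    exact hBbasis.secondCountableTopology hBc
  exact ⟨hbasis, hlc, hsc, ht2, cont_rTilde, openMap, openEmb, cont_inr⟩
end

section
/- For each u ∈ X, the fiber H^u = r̃⁻¹({u}) = G^u ∪ {∞^u} (where G^u = r⁻¹({u})), equipped with the subspace topology from H, is homeomorphic to the one-point compactification of G^u via the map that is the identity on G^u and sends the point at infinity to ∞^u. Moreover, for u ∈ X and a sequence (xₙ) in H, xₙ → ∞^u in H if and only if r̃(xₙ) → u in X and, for every compact subset C of G, xₙ lies in H \ C eventually. -/
open TopologicalSpace Filter

variable {G X : Type*}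

/-- The fiber `H^u = r̃⁻¹({u})` of `H` over `u ∈ X`. -/
def hFiber (r : G → X) (u : X) : Type _ := {p : G ⊕ X // rTilde r p = u}

/-- The subspace topology on the fiber `H^u`, induced from the topology `hTop r` on `H`. -/
def hFiberTop [TopologicalSpace G] [TopologicalSpace X] (r : G → X) (u : X) :
    TopologicalSpace (hFiber r u) :=
  TopologicalSpace.induced (Subtype.val : hFiber r u → G ⊕ X) (hTop r)

/-- The canonical map from the one-point compactification of the fiber `G^u = r⁻¹({u})`
to the fiber `H^u ⊆ H`: it is the identity on `G^u` and sends the point at infinity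
to `∞^u`. -/
def fiberMap (r : G → X) (u : X) : OnePoint {x : G // r x = u} → hFiber r u :=
  fun o => Option.elim o ⟨Sum.inr u, rfl⟩ (fun x => ⟨Sum.inl x.1, x.2⟩)

section Aux

variable [TopologicalSpace G] [TopologicalSpace X] [T2Space G] [T2Space X]

/-- The fiber `{x | r x = u}` is closed in `G`. -/
theorem fiber_isClosed (r : G → X) (hr_cont : Continuous r) (u : X) :
    IsClosed {x : G | r x = u} :=
  isClosed_singleton.preimage hr_cont

/-- Continuity of `fiberMap`. -/
theorem fiberMap_continuous (r : G → X) (hr_cont : Continuous r) (u : X) :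
    @Continuous (OnePoint {x : G // r x = u}) (hFiber r u) _ (hFiberTop r u)
      (fiberMap r u) := by
  letI : TopologicalSpace (hFiber r u) := hFiberTop r u
  refine continuous_induced_rng.mpr ?_
  set φ : OnePoint {x : G // r x = u} → G ⊕ X :=
    (Subtype.val : hFiber r u → G ⊕ X) ∘ fiberMap r u with hφ
  have hφ_none : φ (OnePoint.infty : OnePoint {x : G // r x = u}) = Sum.inr u := rfl
  have hφ_some : ∀ x : {x : G // r x = u}, φ (↑x) = Sum.inl x.1 := fun _ => rfl
  refine continuous_generateFrom_iff.mpr ?_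
  rintro s (⟨U, hU, rfl⟩ | ⟨W, C, hW, hC, rfl⟩)
  · -- preimage of `Sum.inl '' U`
    have : φ ⁻¹' (Sum.inl '' U) =
        ((↑) '' (Subtype.val ⁻¹' U : Set {x : G // r x = u}) :
          Set (OnePoint {x : G // r x = u})) := by
      ext o
      cases o with
      | infty =>
        simp only [Set.mem_preimage, hφ_none]
        constructor
        · rintro ⟨g, -, h⟩; exact absurd h (by simp)
        · rintro ⟨y, -, h⟩; exact (OnePoint.coe_ne_infty y h).elim
      | coe x =>
        simp only [Set.mem_preimage, hφ_some]
        constructor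
        · rintro ⟨g, hg, h⟩
          obtain rfl : g = x.1 := Sum.inl.inj h
          exact ⟨x, hg, rfl⟩
        · rintro ⟨y, hy, h⟩
          have hxy : x = y := (OnePoint.coe_eq_coe.mp h).symm
          exact ⟨y.1, hy, by rw [hxy]⟩
    change IsOpen (φ ⁻¹' _)
    rw [this]
    exact OnePoint.isOpen_image_coe.mpr (hU.preimage continuous_subtype_val)
  · -- preimage of `r̃⁻¹ W \ Sum.inl '' C`
    by_cases hu : u ∈ W
    · have : φ ⁻¹' (rTilde r ⁻¹' W \ Sum.inl '' C) =
          (((↑) '' (Subtype.val ⁻¹' C : Set {x : G // r x = u}) :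
            Set (OnePoint {x : G // r x = u})))ᶜ := by
        ext o
        cases o with
        | infty =>
          simp only [Set.mem_preimage, hφ_none, Set.mem_diff, Set.mem_compl_iff]
          constructor
          · rintro - ⟨y, -, h⟩; exact (OnePoint.coe_ne_infty y h).elim
          · intro _
            refine ⟨hu, ?_⟩
            rintro ⟨g, -, h⟩; exact absurd h (by simp)
        | coe x =>
          simp only [Set.mem_preimage, hφ_some, Set.mem_diff, Set.mem_compl_iff]
          constructor
          · rintro ⟨-, h⟩ ⟨y, hy, hy2⟩
            have hxy : x = y := (OnePoint.coe_eq_coe.mp hy2).symm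
            exact h ⟨y.1, hy, by rw [hxy]⟩
          · intro h
            have hx : r x.1 = u := x.2
            refine ⟨by simpa [rTilde, hx] using hu, ?_⟩
            rintro ⟨g, hg, hg2⟩
            obtain rfl : g = x.1 := Sum.inl.inj hg2
            exact h ⟨x, hg, rfl⟩
      change IsOpen (φ ⁻¹' _)
      rw [this]
      refine OnePoint.isOpen_compl_image_coe.mpr ⟨?_, ?_⟩
      · exact hC.isClosed.preimage continuous_subtype_val
      · refine Topology.IsInducing.subtypeVal.isCompact_preimage ?_ hC
        rw [Subtype.range_coe_subtype]
        exact fiber_isClosed r hr_cont u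
    · have : φ ⁻¹' (rTilde r ⁻¹' W \ Sum.inl '' C) = (∅ : Set (OnePoint _)) := by
        ext o
        cases o with
        | infty =>
          simp only [Set.mem_preimage, hφ_none, Set.mem_diff]
          exact iff_of_false (fun h => hu h.1) (by simp)
        | coe x =>
          simp only [Set.mem_preimage, hφ_some, Set.mem_diff]
          refine iff_of_false (fun h => hu ?_) (by simp)
          have hx : r x.1 = u := x.2
          simpa [rTilde, hx] using h.1
      change IsOpen (φ ⁻¹' _)
      rw [this]
      exact isOpen_empty

/-- `fiberMap` is an open map. -/
theorem fiberMap_isOpenMap (r : G → X) (hr_cont : Continuous r) (u : X) :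
    @IsOpenMap (OnePoint {x : G // r x = u}) (hFiber r u) _ (hFiberTop r u)
      (fiberMap r u) := by
  letI : TopologicalSpace (G ⊕ X) := hTop r
  letI : TopologicalSpace (hFiber r u) := hFiberTop r u
  intro s hs
  obtain ⟨h1, h2⟩ := OnePoint.isOpen_def.mp hs
  obtain ⟨U, hU, hUeq⟩ := isOpen_induced_iff.mp h2
  by_cases hinf : OnePoint.infty ∈ s
  · -- `∞ ∈ s`: use a basic open set of the second kind
    have hK : IsCompact (((↑) ⁻¹' s : Set {x : G // r x = u})ᶜ) := h1 hinf
    set C : Set G := Subtype.val '' (((↑) ⁻¹' s : Set {x : G // r x = u})ᶜ) with hCdef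
    have hC : IsCompact C := hK.image continuous_subtype_val
    refine isOpen_induced_iff.mpr
      ⟨rTilde r ⁻¹' Set.univ \ Sum.inl '' C, ?_, ?_⟩
    · exact isOpen_generateFrom_of_mem
        (Or.inr ⟨Set.univ, C, isOpen_univ, hC, rfl⟩)
    · ext p
      simp only [Set.mem_preimage, Set.mem_diff, Set.mem_univ, true_and, Set.mem_image]
      constructor
      · intro hp
        rcases hp1 : p.1 with g | v
        · have hg : r g = u := by have := p.2; rwa [hp1] at this
          have hx : (⟨g, hg⟩ : {x : G // r x = u}) ∈ ((↑) ⁻¹' s : Set _) := by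
            by_contra hmem
            exact (show p.1 ∈ rTilde r ⁻¹' Set.univ \ Sum.inl '' C from hp).2 ⟨g, ⟨⟨g, hg⟩, hmem, rfl⟩, hp1.symm⟩
          refine ⟨((⟨g, hg⟩ : {x : G // r x = u}) : OnePoint {x : G // r x = u}), hx, ?_⟩
          exact Subtype.ext (by rw [hp1]; rfl)
        · have hv : v = u := by have := p.2; rwa [hp1] at this
          refine ⟨OnePoint.infty, hinf, ?_⟩
          exact Subtype.ext (by rw [hp1, hv]; rfl)
      · rintro ⟨o, ho, rfl⟩
        cases o with
        | infty =>
          show _ ∧ ¬ _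
          refine ⟨Set.mem_univ _, ?_⟩
          rintro ⟨g, -, h⟩
          exact Sum.inl_ne_inr (show Sum.inl g = (Sum.inr u : G ⊕ X) from h)
        | coe x =>
          show _ ∧ ¬ _
          refine ⟨Set.mem_univ _, ?_⟩
          rintro ⟨g, ⟨y, hy, hyg⟩, h⟩
          have : Sum.inl g = Sum.inl x.1 := h
          obtain rfl : g = x.1 := Sum.inl.inj this
          obtain rfl : y = x := Subtype.ext hyg
          exact hy ho
  · -- `∞ ∉ s`: use a basic open set of the first kind
    refine isOpen_induced_iff.mpr ⟨Sum.inl '' U, ?_, ?_⟩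
    · exact isOpen_generateFrom_of_mem (Or.inl ⟨U, hU, rfl⟩)
    · ext p
      simp only [Set.mem_preimage, Set.mem_image]
      constructor
      · rintro ⟨g, hg, hp1⟩
        have hgu : r g = u := by have := p.2; rw [← hp1] at this; exact this
        have hx : (⟨g, hgu⟩ : {x : G // r x = u}) ∈ (Subtype.val ⁻¹' U : Set _) := hg
        rw [hUeq] at hx
        refine ⟨((⟨g, hgu⟩ : {x : G // r x = u}) : OnePoint {x : G // r x = u}), hx, ?_⟩
        exact Subtype.ext (by rw [← hp1]; rfl)
      · rintro ⟨o, ho, rfl⟩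
        cases o with
        | infty => exact absurd ho hinf
        | coe x =>
          have hx : x ∈ ((↑) ⁻¹' s : Set {x : G // r x = u}) := ho
          rw [← hUeq] at hx
          exact ⟨x.1, hx, rfl⟩

/-- `fiberMap` is bijective. -/
theorem fiberMap_bijective (r : G → X) (u : X) :
    Function.Bijective (fiberMap r u) := by
  constructor
  · intro o1 o2 h
    cases o1 with
    | infty =>
      cases o2 with
      | infty => rfl
      | coe y =>
        exact (Sum.inr_ne_inl (show (Sum.inr u : G ⊕ X) = Sum.inl y.1 from congrArg (Subtype.val : hFiber r u → G ⊕ X) h)).elim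
    | coe x =>
      cases o2 with
      | infty =>
        exact (Sum.inl_ne_inr (show Sum.inl x.1 = (Sum.inr u : G ⊕ X) from congrArg (Subtype.val : hFiber r u → G ⊕ X) h)).elim
      | coe y =>
        have h' : Sum.inl x.1 = Sum.inl y.1 := congrArg Subtype.val h
        exact congrArg _ (Subtype.ext (Sum.inl.inj h'))
  · intro p
    rcases hp1 : p.1 with g | v
    · have hg : r g = u := by have := p.2; rwa [hp1] at this
      exact ⟨((⟨g, hg⟩ : {x : G // r x = u}) : OnePoint {x : G // r x = u}), Subtype.ext (by rw [hp1]; rfl)⟩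
    · have hv : v = u := by have := p.2; rwa [hp1] at this
      exact ⟨OnePoint.infty, Subtype.ext (by rw [hp1, hv]; rfl)⟩

end Aux

/-- For every `u ∈ X`, the fiber `H^u = G^u ∪ {∞^u}` with the subspace
topology from `H` is homeomorphic to the one-point compactification of `G^u` via the
canonical map; moreover a sequence `xₙ` in `H` converges to `∞^u` iff `r̃(xₙ) → u` and
`xₙ` eventually avoids every compact subset `C` of `G`. -/
theorem stmt3 [TopologicalSpace G] [TopologicalSpace X]
    [LocallyCompactSpace G] [SecondCountableTopology G] [T2Space G]
    [LocallyCompactSpace X] [SecondCountableTopology X] [T2Space X]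
    (r : G → X) (hr_cont : Continuous r) (hr_open : IsOpenMap r)
    (hr_surj : Function.Surjective r) :
    (∀ u : X,
      @IsHomeomorph (OnePoint {x : G // r x = u}) (hFiber r u) _ (hFiberTop r u)
        (fiberMap r u)) ∧
    (∀ (u : X) (x : ℕ → G ⊕ X),
      Tendsto x atTop (@nhds (G ⊕ X) (hTop r) (Sum.inr u)) ↔
        (Tendsto (fun n => rTilde r (x n)) atTop (nhds u) ∧
          ∀ C : Set G, IsCompact C → ∀ᶠ n in atTop, x n ∉ Sum.inl '' C)) := by
  constructor
  · intro u
    letI : TopologicalSpace (hFiber r u) := hFiberTop r u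
    exact ⟨fiberMap_continuous r hr_cont u, fiberMap_isOpenMap r hr_cont u,
      fiberMap_bijective r u⟩
  · intro u x
    have hn : @nhds (G ⊕ X) (hTop r) (Sum.inr u) =
        ⨅ s ∈ {s | Sum.inr u ∈ s ∧ s ∈ hBasis r}, 𝓟 s := nhds_generateFrom
    rw [hn]
    simp only [tendsto_iInf, tendsto_principal, Set.mem_setOf_eq, and_imp]
    constructor
    · intro h
      constructor
      · rw [tendsto_nhds]
        intro W hW hu
        have hmem : Sum.inr u ∈ rTilde r ⁻¹' W \ Sum.inl '' (∅ : Set G) := by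
          refine ⟨hu, by simp⟩
        have := h (rTilde r ⁻¹' W \ Sum.inl '' (∅ : Set G)) hmem
          (Or.inr ⟨W, ∅, hW, isCompact_empty, rfl⟩)
        exact this.mono fun n hn => hn.1
      · intro C hC
        have hmem : Sum.inr u ∈ rTilde r ⁻¹' Set.univ \ Sum.inl '' C := by
          refine ⟨Set.mem_univ _, ?_⟩
          rintro ⟨g, -, hg⟩; exact absurd hg (by simp)
        have := h (rTilde r ⁻¹' Set.univ \ Sum.inl '' C) hmem
          (Or.inr ⟨Set.univ, C, isOpen_univ, hC, rfl⟩)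
        exact this.mono fun n hn => hn.2
    · rintro ⟨h1, h2⟩ s hs hb
      rcases hb with ⟨U, hU, rfl⟩ | ⟨W, C, hW, hC, rfl⟩
      · rcases hs with ⟨g, -, hg⟩
        exact absurd hg (by simp)
      · have hu : u ∈ W := hs.1
        filter_upwards [tendsto_nhds.mp h1 W hW hu, h2 C hC] with n h1n h2n
        exact ⟨h1n, h2n⟩
end

section
/- Let G be a discrete group and let φ : G → ℂ be a finitely supported function such that for every n ≥ 1, every x₁, …, xₙ ∈ G and every α₁, …, αₙ ∈ ℂ, the sum Σ_{i,j=1}^{n} αᵢ conj(αⱼ) φ(xᵢ⁻¹xⱼ) is a nonnegative real number. Then there exists ξ ∈ ℓ²(G) such that for every x ∈ G, φ(x) = Σ_{t∈G} conj(ξ(x⁻¹t)) ξ(t), the sum being absolutely convergent; that is, φ is the coefficient ⟨λ(x)ξ, ξ⟩ of the left regular representation λ of G on ℓ²(G), where (λ(x)ξ)(t) = ξ(x⁻¹t) and the inner product is conjugate-linear in the first variable. -/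
open scoped ComplexOrder

open scoped ENNReal

open ComplexConjugate

noncomputable section Stmt6Aux

variable {G : Type*} [Group G]

local notation "H" => lp (fun _ : G => ℂ) 2

lemma stmt6_memℓp_comp (e : G ≃ G) (f : G → ℂ) (hf : Memℓp f 2) :
    Memℓp (fun t => f (e t)) 2 := by
  rw [memℓp_gen_iff (by norm_num)] at hf ⊢
  exact (e.summable_iff (f := fun i => ‖f i‖ ^ (2 : ℝ≥0∞).toReal)).2 hf

/-- translation by a bijection of the index set, as a linear isometry equiv of ℓ². -/
def stmt6_transl (e : G ≃ G) : H ≃ₗᵢ[ℂ] H where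
  toFun f := ⟨fun t => f (e t), stmt6_memℓp_comp e f (lp.memℓp f)⟩
  invFun f := ⟨fun t => f (e.symm t), stmt6_memℓp_comp e.symm f (lp.memℓp f)⟩
  left_inv f := by ext t; simp
  right_inv f := by ext t; simp
  map_add' f g := by ext t; simp [lp.coeFn_add]; rfl
  map_smul' c f := by ext t; simp [lp.coeFn_smul]
  norm_map' f := by
    rw [lp.norm_eq_tsum_rpow (by norm_num), lp.norm_eq_tsum_rpow (by norm_num)]
    congr 1
    exact e.tsum_eq (f := fun i => ‖f i‖ ^ (2 : ℝ≥0∞).toReal)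

@[simp] lemma stmt6_transl_apply (e : G ≃ G) (f : H) (t : G) :
    (stmt6_transl e f : G → ℂ) t = f (e t) := rfl

end Stmt6Aux

section M
variable {G : Type*} [Group G]
local notation "H" => lp (fun _ : G => ℂ) 2

/-- left regular representation -/
noncomputable def stmt6_lam (x : G) : H ≃ₗᵢ[ℂ] H := stmt6_transl (Equiv.mulLeft x⁻¹)

@[simp] lemma stmt6_lam_apply (x : G) (f : H) (t : G) :
    (stmt6_lam x f : G → ℂ) t = f (x⁻¹ * t) := rfl

/-- the right convolution operator by φ -/
noncomputable def stmt6_M (φ : G → ℂ) (S : Finset G) : H →L[ℂ] H :=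
  ∑ u ∈ S, φ u • ((stmt6_transl (Equiv.mulRight u⁻¹)).toLinearIsometry.toContinuousLinearMap)

lemma stmt6_M_apply (φ : G → ℂ) (S : Finset G) (f : H) (t : G) :
    (stmt6_M φ S f : G → ℂ) t = ∑ u ∈ S, φ u * f (t * u⁻¹) := by
  simp [stmt6_M, ContinuousLinearMap.sum_apply, lp.coeFn_sum, lp.coeFn_smul, Finset.sum_apply]
  exact (Finset.sum_apply (M := fun _ : G => ℂ) t S _).trans (Finset.sum_congr rfl fun u _ => rfl)

lemma stmt6_M_single [DecidableEq G] (φ : G → ℂ) (S : Finset G) (hS : ∀ u, u ∉ S → φ u = 0)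
    (j : G) (b : ℂ) (t : G) :
    (stmt6_M φ S (lp.single 2 j b) : G → ℂ) t = φ (j⁻¹ * t) * b := by
  classical
  rw [stmt6_M_apply]
  have : ∀ u ∈ S, φ u * (lp.single 2 j b : G → ℂ) (t * u⁻¹)
      = if u = j⁻¹ * t then φ (j⁻¹ * t) * b else 0 := by
    intro u hu
    rcases eq_or_ne u (j⁻¹ * t) with h | h
    · subst h
      rw [if_pos rfl]
      have : t * (j⁻¹ * t)⁻¹ = j := by group
      rw [this, lp.single_apply_self]
    · rw [if_neg h, lp.single_apply_ne]
      · ring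
      · intro hc
        apply h
        rw [← hc]; group
  rw [Finset.sum_congr rfl this, Finset.sum_ite_eq' S]
  split_ifs with h
  · rfl
  · rw [hS _ h, zero_mul]

lemma stmt6_M_comm (φ : G → ℂ) (S : Finset G) (x : G) :
    (stmt6_lam x).toLinearIsometry.toContinuousLinearMap ∘L stmt6_M φ S
      = stmt6_M φ S ∘L (stmt6_lam x).toLinearIsometry.toContinuousLinearMap := by
  ext f t
  simp only [ContinuousLinearMap.comp_apply, LinearIsometry.coe_toContinuousLinearMap,
    LinearIsometryEquiv.coe_toLinearIsometry, stmt6_lam_apply, stmt6_M_apply, mul_assoc]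

end M

section conjSec
variable {G : Type*} [Group G]
local notation "H" => lp (fun _ : G => ℂ) 2

open ContinuousLinearMap in
/-- conjugation by a unitary as a star algebra homomorphism -/
noncomputable def stmt6_conj (U : H ≃ₗᵢ[ℂ] H) : (H →L[ℂ] H) →⋆ₐ[ℂ] (H →L[ℂ] H) where
  toFun T := (U : H →L[ℂ] H) ∘L T ∘L (U.symm : H →L[ℂ] H)
  map_one' := by ext f t; simp
  map_mul' T S := by ext f t; simp
  map_zero' := by ext f t; simp
  map_add' T S := by ext f t; simp
  commutes' c := by ext f t; simp
  map_star' T := by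
    simp only [star_eq_adjoint, adjoint_comp, LinearIsometryEquiv.adjoint_eq_symm,
      LinearIsometryEquiv.symm_symm, comp_assoc]

open ContinuousLinearMap in
lemma stmt6_conj_continuous (U : H ≃ₗᵢ[ℂ] H) : Continuous (stmt6_conj (G := G) U) := by
  have : ⇑(stmt6_conj (G := G) U) =
      ⇑(((compL ℂ H H H (U : H →L[ℂ] H))).comp ((compL ℂ H H H).flip (U.symm : H →L[ℂ] H))) := by
    funext T
    rfl
  rw [this]
  exact ContinuousLinearMap.continuous _
end conjSec

section pos
variable {G : Type*} [Group G] [DecidableEq G]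
local notation "H" => lp (fun _ : G => ℂ) 2
open ComplexConjugate

lemma stmt6_isClosed_nonneg : IsClosed {z : ℂ | 0 ≤ z} := by
  have : {z : ℂ | 0 ≤ z} = Complex.re ⁻¹' Set.Ici 0 ∩ Complex.im ⁻¹' {0} := by
    ext z
    simp [Complex.le_def, eq_comm]
  rw [this]
  exact (isClosed_Ici.preimage Complex.continuous_re).inter
    (isClosed_singleton.preimage Complex.continuous_im)

lemma stmt6_inner_nonneg (φ : G → ℂ) (S : Finset G) (hS : ∀ u, u ∉ S → φ u = 0)
    (hpos : ∀ (s : Finset G) (α : G → ℂ),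
      0 ≤ ∑ i ∈ s, ∑ j ∈ s, conj (α i) * α j * φ (j⁻¹ * i)) (f : H) :
    0 ≤ (inner ℂ f (stmt6_M φ S f) : ℂ) := by
  have hQ : Continuous fun g : H => (inner ℂ g (stmt6_M φ S g) : ℂ) :=
    continuous_id.inner ((stmt6_M φ S).continuous)
  have hs : Filter.Tendsto (fun s : Finset G => ∑ i ∈ s, lp.single 2 i (f i))
      Filter.atTop (nhds f) := lp.hasSum_single (by norm_num) f
  refine stmt6_isClosed_nonneg.mem_of_tendsto (((hQ.tendsto f).comp hs)) ?_
  filter_upwards with s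
  show 0 ≤ (inner ℂ (∑ i ∈ s, lp.single 2 i (f i))
    (stmt6_M φ S (∑ j ∈ s, lp.single 2 j (f j))) : ℂ)
  rw [map_sum, sum_inner]
  have : ∀ i ∈ s, (inner ℂ (lp.single 2 i (f i))
      (∑ j ∈ s, stmt6_M φ S (lp.single 2 j (f j))) : ℂ)
      = ∑ j ∈ s, conj (f i) * f j * φ (j⁻¹ * i) := by
    intro i _
    rw [inner_sum]
    refine Finset.sum_congr rfl fun j _ => ?_
    rw [lp.inner_single_left, stmt6_M_single φ S hS, RCLike.inner_apply]
    ring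
  rw [Finset.sum_congr rfl this]
  exact hpos s f

lemma stmt6_M_nonneg (φ : G → ℂ) (S : Finset G) (hS : ∀ u, u ∉ S → φ u = 0)
    (hpos : ∀ (s : Finset G) (α : G → ℂ),
      0 ≤ ∑ i ∈ s, ∑ j ∈ s, conj (α i) * α j * φ (j⁻¹ * i)) :
    0 ≤ stmt6_M φ S := by
  rw [ContinuousLinearMap.nonneg_iff_isPositive, ContinuousLinearMap.isPositive_iff_complex]
  intro x
  have h := stmt6_inner_nonneg φ S hS hpos x
  set z : ℂ := inner ℂ x (stmt6_M φ S x) with hz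
  have him : z.im = 0 := by
    rw [Complex.le_def] at h
    simpa using h.2.symm
  have hre : 0 ≤ z.re := by
    rw [Complex.le_def] at h
    simpa using h.1
  have hTx : (inner ℂ (stmt6_M φ S x) x : ℂ) = z := by
    rw [← inner_conj_symm, ← hz, Complex.conj_eq_iff_im.2 him]
  rw [hTx]
  constructor
  · rw [RCLike.re_to_complex]
    exact Complex.ext rfl him.symm
  · rw [RCLike.re_to_complex]
    exact hre
end pos

section sqrt
variable {G : Type*} [Group G] [DecidableEq G]
local notation "H" => lp (fun _ : G => ℂ) 2

lemma stmt6_sqrt_exists (M : (H →L[ℂ] H)) (hM : 0 ≤ M)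
    (hcomm : ∀ x : G, stmt6_conj (stmt6_lam x) M = M) :
    ∃ N : (H →L[ℂ] H), IsSelfAdjoint N ∧ N * N = M ∧
      ∀ x : G, stmt6_conj (stmt6_lam x) N = N := by
  letI : ContinuousFunctionalCalculus ℝ (H →L[ℂ] H) IsSelfAdjoint :=
    IsSelfAdjoint.instContinuousFunctionalCalculus
  refine ⟨cfc Real.sqrt M, cfc_predicate _ M, ?_, ?_⟩
  · rw [← cfc_mul Real.sqrt Real.sqrt M]
    have h1 : ∀ z ∈ spectrum ℝ M, Real.sqrt z * Real.sqrt z = id z := by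
      intro z hz
      exact Real.mul_self_sqrt (spectrum_nonneg_of_nonneg hM hz)
    rw [cfc_congr h1, cfc_id ℝ M]
  · intro x
    have := StarAlgHomClass.map_cfc (stmt6_conj (stmt6_lam x)) Real.sqrt M
      (Real.continuous_sqrt.continuousOn) (stmt6_conj_continuous _)
      (IsSelfAdjoint.of_nonneg hM) (by rw [hcomm x]; exact IsSelfAdjoint.of_nonneg hM)
    rw [this, hcomm x]
end sqrt

section assemble
variable {G : Type*} [Group G] [DecidableEq G]
local notation "H" => lp (fun _ : G => ℂ) 2

@[simp] lemma stmt6_transl_symm (e : G ≃ G) :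
    (stmt6_transl e).symm = stmt6_transl e.symm := rfl

lemma stmt6_symm_comp_self (U : (lp (fun _ : G => ℂ) 2) ≃ₗᵢ[ℂ] (lp (fun _ : G => ℂ) 2)) :
    (U.symm : H →L[ℂ] H) ∘L (U : H →L[ℂ] H) = 1 := by
  ext f t
  simp

lemma stmt6_conj_apply (U : (lp (fun _ : G => ℂ) 2) ≃ₗᵢ[ℂ] (lp (fun _ : G => ℂ) 2))
    (T : H →L[ℂ] H) :
    stmt6_conj U T = (U : H →L[ℂ] H) ∘L T ∘L (U.symm : H →L[ℂ] H) := rfl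

lemma stmt6_M_conj (φ : G → ℂ) (S : Finset G) (x : G) :
    stmt6_conj (stmt6_lam x) (stmt6_M φ S) = stmt6_M φ S := by
  rw [stmt6_conj_apply]
  ext f t
  simp only [ContinuousLinearMap.comp_apply, ContinuousLinearMap.coe_coe,
    LinearIsometryEquiv.coe_coe]
  show ((stmt6_lam x) ((stmt6_M φ S) ((stmt6_lam x).symm f)) : G → ℂ) t
    = ((stmt6_M φ S f : G → ℂ)) t
  rw [show ((stmt6_lam x) ((stmt6_M φ S) ((stmt6_lam x).symm f)) : G → ℂ) t
    = ((stmt6_M φ S) ((stmt6_lam x).symm f) : G → ℂ) (x⁻¹ * t) from rfl]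
  rw [stmt6_M_apply, stmt6_M_apply]
  refine Finset.sum_congr rfl fun u _ => ?_
  congr 1
  show (f : G → ℂ) ((Equiv.mulLeft x⁻¹).symm (x⁻¹ * t * u⁻¹)) = f (t * u⁻¹)
  simp [mul_assoc]

lemma stmt6_lam_comm_of_conj {N : H →L[ℂ] H} {x : G}
    (h : stmt6_conj (stmt6_lam x) N = N) :
    ((stmt6_lam x : H →L[ℂ] H)) ∘L N = N ∘L ((stmt6_lam x : H →L[ℂ] H)) := by
  rw [stmt6_conj_apply] at h
  have h' : (((stmt6_lam x : H →L[ℂ] H)) ∘L N ∘L ((stmt6_lam x).symm : H →L[ℂ] H))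
      ∘L ((stmt6_lam x : H →L[ℂ] H)) = N ∘L ((stmt6_lam x : H →L[ℂ] H)) := by rw [h]
  rw [← h']
  rw [ContinuousLinearMap.comp_assoc, ContinuousLinearMap.comp_assoc,
    stmt6_symm_comp_self]
  rfl

lemma stmt6_lam_single_one (x : G) :
    stmt6_lam x (lp.single 2 (1 : G) (1 : ℂ)) = lp.single 2 x (1 : ℂ) := by
  ext t
  show (lp.single 2 (1 : G) (1 : ℂ) : G → ℂ) (x⁻¹ * t) = (lp.single 2 x (1 : ℂ) : G → ℂ) t
  rcases eq_or_ne t x with rfl | h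
  · rw [inv_mul_cancel, lp.single_apply_self, lp.single_apply_self]
  · rw [lp.single_apply_ne, lp.single_apply_ne]
    · exact h
    · intro hc
      rw [inv_mul_eq_one] at hc
      exact h hc.symm

end assemble

/-- Let `G` be a countable discrete group and `φ : G → ℂ` a finitely
supported positive definite function (all matrices `[φ(xᵢ⁻¹xⱼ)]` are positive).  Then
there is `ξ ∈ ℓ²(G)` such that for every `x`, `φ x = Σ_t conj (ξ (x⁻¹ t)) * ξ t`, the sum
being absolutely convergent; that is, `φ` is the coefficient `⟨λ(x)ξ, ξ⟩` of the left
regular representation. -/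
theorem stmt6 {G : Type*} [Group G] [Countable G] (φ : G → ℂ)
    (hφ_fin : (Function.support φ).Finite)
    (hpd : ∀ n : ℕ, 1 ≤ n → ∀ (x : Fin n → G) (α : Fin n → ℂ),
      0 ≤ ∑ i, ∑ j, α i * (starRingEnd ℂ) (α j) * φ ((x i)⁻¹ * x j)) :
    ∃ ξ : G → ℂ, Memℓp ξ 2 ∧ ∀ x : G,
      Summable (fun t : G => ‖(starRingEnd ℂ) (ξ (x⁻¹ * t)) * ξ t‖) ∧
      φ x = ∑' t : G, (starRingEnd ℂ) (ξ (x⁻¹ * t)) * ξ t := by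
  classical
  set S := hφ_fin.toFinset with hSdef
  have hS : ∀ u, u ∉ S → φ u = 0 := by
    intro u hu
    by_contra h
    exact hu (hφ_fin.mem_toFinset.2 h)
  -- the Finset version of positive definiteness
  have hpos : ∀ (s : Finset G) (α : G → ℂ),
      0 ≤ ∑ i ∈ s, ∑ j ∈ s, conj (α i) * α j * φ (j⁻¹ * i) := by
    intro s α
    rcases Finset.eq_empty_or_nonempty s with rfl | hne
    · simp
    have hn : 1 ≤ s.card := Finset.card_pos.2 hne
    set e := s.equivFin with he
    set x : Fin s.card → G := fun k => (e.symm k : G) with hx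
    have key : ∀ g : G → ℂ, ∑ i ∈ s, g i = ∑ k, g (x k) := by
      intro g
      rw [← Finset.sum_coe_sort s g]
      exact (Equiv.sum_comp e.symm (fun i : {y // y ∈ s} => g (i : G))).symm
    rw [key fun i => ∑ j ∈ s, conj (α i) * α j * φ (j⁻¹ * i)]
    rw [Finset.sum_congr rfl fun k (_ : k ∈ Finset.univ) =>
      key fun j => conj (α (x k)) * α j * φ (j⁻¹ * (x k))]
    have h := hpd s.card hn x (fun k => α (x k))
    have heq : ∑ k, ∑ l, conj (α (x k)) * α (x l) * φ ((x l)⁻¹ * (x k))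
        = ∑ i, ∑ j, (α (x i)) * conj (α (x j)) * φ ((x i)⁻¹ * x j) := by
      rw [Finset.sum_comm]
      exact Finset.sum_congr rfl fun l _ => Finset.sum_congr rfl fun k _ => by ring
    rw [heq]
    exact h
  have hM := stmt6_M_nonneg φ S hS hpos
  obtain ⟨N, hNsa, hNN, hNconj⟩ :=
    stmt6_sqrt_exists (stmt6_M φ S) hM (fun x => stmt6_M_conj φ S x)
  set δ : lp (fun _ : G => ℂ) 2 := lp.single 2 (1 : G) (1 : ℂ) with hδ
  set ξH : lp (fun _ : G => ℂ) 2 := N δ with hξH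
  refine ⟨(ξH : G → ℂ), lp.memℓp ξH, fun x => ?_⟩
  have hNmove : ∀ a b : lp (fun _ : G => ℂ) 2, (inner ℂ (N a) b : ℂ) = inner ℂ a (N b) := by
    intro a b
    conv_lhs => rw [← hNsa.adjoint_eq]
    exact ContinuousLinearMap.adjoint_inner_left N b a
  -- summability
  have h2 : Summable fun t : G => ‖(ξH : G → ℂ) t‖ ^ 2 := by
    have h2' := (memℓp_gen_iff (p := 2)
      (by norm_num) (f := (ξH : G → ℂ))).1 (lp.memℓp ξH)
    have : ∀ t : G, ‖(ξH : G → ℂ) t‖ ^ ((2 : ℝ≥0∞).toReal) = ‖(ξH : G → ℂ) t‖ ^ 2 := by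
      intro t
      rw [ENNReal.toReal_ofNat]
      rw [show ((2:ℝ)) = ((2:ℕ):ℝ) by norm_num, Real.rpow_natCast]
    exact (summable_congr this).1 h2'
  have h1 : Summable fun t : G => ‖(ξH : G → ℂ) (x⁻¹ * t)‖ ^ 2 :=
    (Equiv.summable_iff (Equiv.mulLeft x⁻¹)
      (f := fun t : G => ‖(ξH : G → ℂ) t‖ ^ 2)).2 h2
  constructor
  · refine Summable.of_nonneg_of_le (fun t => norm_nonneg _) (fun t => ?_)
      ((h1.add h2).div_const 2)
    rw [norm_mul, RCLike.norm_conj]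
    nlinarith [sq_nonneg (‖(ξH : G → ℂ) (x⁻¹ * t)‖ - ‖(ξH : G → ℂ) t‖),
      norm_nonneg ((ξH : G → ℂ) (x⁻¹ * t)), norm_nonneg ((ξH : G → ℂ) t)]
  -- the identity
  have hcomm := stmt6_lam_comm_of_conj (hNconj x)
  have hcommδ : stmt6_lam x (N δ) = N (stmt6_lam x δ) := by
    have := congrArg (fun T => T δ) hcomm
    simpa using this
  calc φ x = ((stmt6_M φ S δ) : G → ℂ) x := by
        rw [hδ, stmt6_M_single φ S hS 1 1 x]
        simp
    _ = (inner ℂ (lp.single 2 x (1 : ℂ)) (stmt6_M φ S δ) : ℂ) := by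
        rw [lp.inner_single_left]
        simp
    _ = (inner ℂ (stmt6_lam x δ) (stmt6_M φ S δ) : ℂ) := by rw [stmt6_lam_single_one]
    _ = (inner ℂ (stmt6_lam x δ) (N (N δ)) : ℂ) := by
        rw [← hNN]
        rfl
    _ = (inner ℂ (N (stmt6_lam x δ)) (N δ) : ℂ) := (hNmove _ _).symm
    _ = (inner ℂ (stmt6_lam x ξH) ξH : ℂ) := by rw [hcommδ, hξH]
    _ = ∑' t : G, conj ((ξH : G → ℂ) (x⁻¹ * t)) * (ξH : G → ℂ) t := by
        rw [lp.inner_eq_tsum]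
        exact tsum_congr fun t => by rw [RCLike.inner_apply, mul_comm]; rfl
end

section
/- Let n ≥ 1 and let T : Mₙ(ℂ) → Mₙ(ℂ) be a ℂ-linear map. The following are equivalent: (a) T is adjointable, i.e. there exists a ℂ-linear map S : Mₙ(ℂ) → Mₙ(ℂ) such that ⟨T A, B⟩ = ⟨A, S B⟩ (as functions Fin n → ℂ) for all A, B ∈ Mₙ(ℂ); (b) T is a module map: T(A·b) = (T A)·b for all A ∈ Mₙ(ℂ) and all b : Fin n → ℂ; (c) T preserves row spaces: for all i, j, T(E_{ij}) lies in the linear span of {E_{il} : 1 ≤ l ≤ n}, where E_{ij} are the standard matrix units. -/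
/-- The right action of `Dₙ = (Fin n → ℂ)` on `Mₙ(ℂ)`: `(A·b)_{ij} = A_{ij} b i`
(row `i` is multiplied by `b i`). -/
noncomputable def matAct {n : ℕ} (A : Matrix (Fin n) (Fin n) ℂ) (b : Fin n → ℂ) :
    Matrix (Fin n) (Fin n) ℂ :=
  Matrix.of fun i j => A i j * b i

/-- The `Dₙ`-valued inner product on `Mₙ(ℂ)`: `⟨A, B⟩ i = Σⱼ conj (A i j) * B i j`. -/
noncomputable def matInner {n : ℕ} (A B : Matrix (Fin n) (Fin n) ℂ) : Fin n → ℂ :=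
  fun i => ∑ j, (starRingEnd ℂ) (A i j) * B i j

namespace Stmt10Aux

open Matrix

variable {n : ℕ}

lemma matAct_apply (A : Matrix (Fin n) (Fin n) ℂ) (b : Fin n → ℂ) (i j : Fin n) :
    matAct A b i j = A i j * b i := rfl

/-- `matAct · b` as a linear map. -/
noncomputable def matActL (b : Fin n → ℂ) :
    Matrix (Fin n) (Fin n) ℂ →ₗ[ℂ] Matrix (Fin n) (Fin n) ℂ where
  toFun A := matAct A b
  map_add' A B := by ext i j; simp [matAct_apply, Matrix.add_apply, add_mul]
  map_smul' c A := by ext i j; simp [matAct_apply, Matrix.smul_apply, mul_assoc]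

lemma matActL_apply (b : Fin n → ℂ) (A : Matrix (Fin n) (Fin n) ℂ) :
    matActL b A = matAct A b := rfl

lemma rows_zero_of_mem_span (i : Fin n) (M : Matrix (Fin n) (Fin n) ℂ)
    (hM : M ∈ Submodule.span ℂ (Set.range fun l : Fin n => Matrix.single i l (1:ℂ))) :
    ∀ k, k ≠ i → ∀ j, M k j = 0 := by
  induction hM using Submodule.span_induction with
  | mem x hx =>
      obtain ⟨l, rfl⟩ := hx
      intro k hk j
      simp [Matrix.single, Ne.symm hk]
  | zero => simp
  | add x y _ _ hx hy => intro k hk j; simp [Matrix.add_apply, hx k hk j, hy k hk j]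
  | smul c x _ hx => intro k hk j; simp [Matrix.smul_apply, hx k hk j]

lemma mem_span_of_rows_zero (i : Fin n) (M : Matrix (Fin n) (Fin n) ℂ)
    (h : ∀ k, k ≠ i → ∀ j, M k j = 0) :
    M ∈ Submodule.span ℂ (Set.range fun l : Fin n => Matrix.single i l (1:ℂ)) := by
  have hM : M = ∑ l, M i l • Matrix.single i l (1:ℂ) := by
    ext k j
    by_cases hk : k = i
    · subst hk
      simp [Matrix.sum_apply, Matrix.single, Finset.sum_ite_eq]
    · simp [Matrix.sum_apply, Matrix.single, Ne.symm hk, h k hk j]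
  rw [hM]
  exact Submodule.sum_mem _ fun l _ =>
    Submodule.smul_mem _ _ (Submodule.subset_span ⟨l, rfl⟩)

lemma matAct_of_rows_zero (i : Fin n) (M : Matrix (Fin n) (Fin n) ℂ)
    (h : ∀ k, k ≠ i → ∀ j, M k j = 0) (b : Fin n → ℂ) :
    matAct M b = b i • M := by
  ext k j
  by_cases hk : k = i
  · subst hk; simp [matAct_apply, mul_comm]
  · simp [matAct_apply, h k hk j]

lemma matAct_stdBasisMatrix (i j : Fin n) (b : Fin n → ℂ) :
    matAct (Matrix.single i j (1:ℂ)) b = b i • Matrix.single i j (1:ℂ) := by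
  apply matAct_of_rows_zero
  intro k hk l
  simp [Matrix.single, Ne.symm hk]

noncomputable def delta (i : Fin n) : Fin n → ℂ := fun k => if k = i then 1 else 0

/-- candidate adjoint -/
noncomputable def adjAux (T : Matrix (Fin n) (Fin n) ℂ →ₗ[ℂ] Matrix (Fin n) (Fin n) ℂ) :
    Matrix (Fin n) (Fin n) ℂ →ₗ[ℂ] Matrix (Fin n) (Fin n) ℂ where
  toFun B := Matrix.of fun i j =>
    ∑ k, ∑ l, (starRingEnd ℂ) (T (Matrix.single i j (1:ℂ)) k l) * B k l
  map_add' B C := by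
    ext i j
    simp [Matrix.add_apply, mul_add, Finset.sum_add_distrib]
  map_smul' c B := by
    ext i j
    simp [Matrix.smul_apply, smul_eq_mul, Finset.mul_sum, mul_left_comm]

lemma adjAux_apply (T : Matrix (Fin n) (Fin n) ℂ →ₗ[ℂ] Matrix (Fin n) (Fin n) ℂ)
    (B : Matrix (Fin n) (Fin n) ℂ) (i j : Fin n) :
    adjAux T B i j = ∑ k, ∑ l, (starRingEnd ℂ) (T (Matrix.single i j (1:ℂ)) k l) * B k l := rfl

lemma matInner_matAct_left (A B : Matrix (Fin n) (Fin n) ℂ) (b : Fin n → ℂ) (i : Fin n) :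
    matInner (matAct A b) B i = (starRingEnd ℂ) (b i) * matInner A B i := by
  simp [matInner, matAct_apply, Finset.mul_sum]
  exact Finset.sum_congr rfl fun j _ => by ring

lemma matAct_delta_decomp (A : Matrix (Fin n) (Fin n) ℂ) (i : Fin n) :
    matAct A (delta i) = ∑ j, A i j • Matrix.single i j (1:ℂ) := by
  ext k l
  by_cases hk : k = i
  · subst hk
    simp [matAct_apply, delta, Matrix.sum_apply, Matrix.single, Finset.sum_ite_eq]
  · simp [matAct_apply, delta, hk, Matrix.sum_apply, Matrix.single, Ne.symm hk]

end Stmt10Aux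

namespace Stmt10Aux

lemma matInner_sub_left (A B C : Matrix (Fin n) (Fin n) ℂ) (i : Fin n) :
    matInner (A - B) C i = matInner A C i - matInner B C i := by
  simp [matInner, Matrix.sub_apply, sub_mul, Finset.sum_sub_distrib]

lemma triple_swap {M : Type*} [AddCommMonoid M] (f : Fin n → Fin n → Fin n → M) :
    ∑ k, ∑ l, ∑ j, f k l j = ∑ j, ∑ k, ∑ l, f k l j := by
  have h1 : ∀ k, ∑ l, ∑ j, f k l j = ∑ j, ∑ l, f k l j := fun k => Finset.sum_comm
  simp_rw [h1]
  exact Finset.sum_comm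

end Stmt10Aux

open Stmt10Aux Matrix in
/-- For a ℂ-linear `T : Mₙ(ℂ) → Mₙ(ℂ)`, the following are equivalent:
(a) `T` is adjointable for the `Dₙ`-valued inner product;
(b) `T` is a `Dₙ`-module map;
(c) `T` maps each matrix unit `E_{ij}` into the span of the matrix units `E_{il}`,
`1 ≤ l ≤ n` (it preserves row spaces). -/
theorem stmt10 {n : ℕ} (hn : 1 ≤ n)
    (T : Matrix (Fin n) (Fin n) ℂ →ₗ[ℂ] Matrix (Fin n) (Fin n) ℂ) :
    ((∃ S : Matrix (Fin n) (Fin n) ℂ →ₗ[ℂ] Matrix (Fin n) (Fin n) ℂ,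
        ∀ A B : Matrix (Fin n) (Fin n) ℂ, matInner (T A) B = matInner A (S B)) ↔
      (∀ (A : Matrix (Fin n) (Fin n) ℂ) (b : Fin n → ℂ),
        T (matAct A b) = matAct (T A) b)) ∧
    ((∀ (A : Matrix (Fin n) (Fin n) ℂ) (b : Fin n → ℂ),
        T (matAct A b) = matAct (T A) b) ↔
      (∀ i j : Fin n, T (Matrix.single i j (1 : ℂ)) ∈
        Submodule.span ℂ (Set.range fun l : Fin n =>
          Matrix.single i l (1 : ℂ)))) := by
  constructor
  · constructor
    · -- (a) → (b)
      rintro ⟨S, hS⟩ A b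
      set C := T (matAct A b) - matAct (T A) b with hCdef
      have hzero : ∀ B i, matInner C B i = 0 := by
        intro B i
        rw [hCdef, matInner_sub_left]
        have e1 : matInner (T (matAct A b)) B i = (starRingEnd ℂ) (b i) * matInner A (S B) i := by
          rw [congrFun (hS (matAct A b) B) i, matInner_matAct_left]
        have e2 : matInner (matAct (T A) b) B i = (starRingEnd ℂ) (b i) * matInner A (S B) i := by
          rw [matInner_matAct_left, congrFun (hS A B) i]
        rw [e1, e2, sub_self]
      have hC0 : C = 0 := by
        ext i j
        have h := hzero C i
        have h2 : ((∑ l, Complex.normSq (C i l) : ℝ) : ℂ) = 0 := by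
          push_cast
          simpa [matInner, Complex.normSq_eq_conj_mul_self] using h
        have h3 : ∑ l, Complex.normSq (C i l) = 0 := by exact_mod_cast h2
        have h4 := (Finset.sum_eq_zero_iff_of_nonneg
          (fun l _ => Complex.normSq_nonneg _)).mp h3 j (Finset.mem_univ j)
        simpa using Complex.normSq_eq_zero.mp h4
      exact sub_eq_zero.mp hC0
    · -- (b) → (a)
      intro hb
      refine ⟨adjAux T, fun A B => ?_⟩
      funext i
      have hrow := hb A (delta i)
      have step1 : ∀ M : Matrix (Fin n) (Fin n) ℂ,
          (∑ k, ∑ l, (starRingEnd ℂ) ((matAct M (delta i)) k l) * B k l) = matInner M B i := by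
        intro M
        rw [Finset.sum_eq_single i]
        · simp [matAct_apply, delta, matInner]
        · intro k _ hk; simp [matAct_apply, delta, hk]
        · simp
      have main : (∑ k, ∑ l, (starRingEnd ℂ) ((T (matAct A (delta i))) k l) * B k l)
          = matInner A (adjAux T B) i := by
        rw [matAct_delta_decomp, map_sum]
        simp only [Matrix.sum_apply, LinearMap.map_smul, Matrix.smul_apply, smul_eq_mul, map_sum, _root_.map_mul,
          Finset.sum_mul, matInner, adjAux_apply, Finset.mul_sum]
        rw [triple_swap]
        exact Finset.sum_congr rfl fun j _ => Finset.sum_congr rfl fun k _ =>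
          Finset.sum_congr rfl fun l _ => by ring
      calc matInner (T A) B i
          = ∑ k, ∑ l, (starRingEnd ℂ) ((matAct (T A) (delta i)) k l) * B k l := (step1 _).symm
        _ = ∑ k, ∑ l, (starRingEnd ℂ) ((T (matAct A (delta i))) k l) * B k l := by rw [hrow]
        _ = matInner A (adjAux T B) i := main
  · constructor
    · -- (b) → (c)
      intro hb i j
      have h := hb (Matrix.single i j (1:ℂ)) (delta i)
      have hE : matAct (Matrix.single i j (1:ℂ)) (delta i)
          = Matrix.single i j 1 := by
        rw [matAct_stdBasisMatrix]; simp [delta]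
      rw [hE] at h
      apply mem_span_of_rows_zero
      intro k hk l
      rw [h]
      simp [matAct_apply, delta, hk]
    · -- (c) → (b)
      intro hc A b
      have key : (T ∘ₗ matActL b) = (matActL b ∘ₗ T) := by
        apply Module.Basis.ext (Matrix.stdBasis ℂ (Fin n) (Fin n))
        rintro ⟨i, j⟩
        simp only [LinearMap.comp_apply, Matrix.stdBasis_eq_single, matActL_apply]
        rw [matAct_stdBasisMatrix, LinearMap.map_smul,
          matAct_of_rows_zero i _ (rows_zero_of_mem_span i _ (hc i j))]
      exact LinearMap.congr_fun key A
end

section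
/- Let n ≥ 1. The ℂ-vector space of all ℂ-linear maps T : Mₙ(ℂ) → Mₙ(ℂ) satisfying T(A·b) = (T A)·b for all A ∈ Mₙ(ℂ) and all b : Fin n → ℂ has dimension n³ over ℂ. -/
/-- The ℂ-subspace of `End(Mₙ(ℂ))` consisting of the `Dₙ`-module maps
(`T (A·b) = (T A)·b` for all `A`, `b`). -/
noncomputable def moduleMaps (n : ℕ) :
    Submodule ℂ (Matrix (Fin n) (Fin n) ℂ →ₗ[ℂ] Matrix (Fin n) (Fin n) ℂ) where
  carrier := {T | ∀ (A : Matrix (Fin n) (Fin n) ℂ) (b : Fin n → ℂ),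
    T (matAct A b) = matAct (T A) b}
  add_mem' := by
    intro T S hT hS A b
    simp only [LinearMap.add_apply, hT A b, hS A b]
    ext i j
    simp [matAct, Matrix.add_apply, add_mul]
  zero_mem' := by
    intro A b
    ext i j
    simp [matAct]
  smul_mem' := by
    intro c T hT A b
    simp only [LinearMap.smul_apply, hT A b]
    ext i j
    simp only [matAct, Matrix.smul_apply, Matrix.of_apply, smul_eq_mul]
    ring

open Matrix in
noncomputable def psiMap (n : ℕ) (c : Fin n × Fin n × Fin n → ℂ) :
    Matrix (Fin n) (Fin n) ℂ →ₗ[ℂ] Matrix (Fin n) (Fin n) ℂ where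
  toFun A := Matrix.of fun i j => ∑ k, c (i, j, k) * A i k
  map_add' A B := by
    ext i j
    simp [Matrix.add_apply, mul_add, Finset.sum_add_distrib]
  map_smul' r A := by
    ext i j
    simp [Matrix.smul_apply, Finset.mul_sum]
    ring_nf
    exact Finset.sum_congr rfl fun k _ => by ring

open Matrix in
lemma psi_mem (n : ℕ) (c : Fin n × Fin n × Fin n → ℂ) : psiMap n c ∈ moduleMaps n := by
  intro A b
  ext i j
  simp only [psiMap, LinearMap.coe_mk, AddHom.coe_mk, matAct, Matrix.of_apply, Finset.sum_mul]
  exact Finset.sum_congr rfl fun k _ => by ring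

open Matrix in
lemma row_zero {n : ℕ} (T : Matrix (Fin n) (Fin n) ℂ →ₗ[ℂ] Matrix (Fin n) (Fin n) ℂ)
    (hT : T ∈ moduleMaps n) {i i' k j : Fin n} (h : i ≠ i') :
    T (Matrix.single i' k 1) i j = 0 := by
  have hb : matAct (Matrix.single i' k 1) (fun x => if x = i' then 1 else 0)
      = Matrix.single i' k 1 := by
    ext a b
    simp only [matAct, Matrix.of_apply, Matrix.single, Matrix.of_apply]
    by_cases ha : a = i'
    · simp [ha]
    · have h2 : i' ≠ a := fun e => ha e.symm
      simp [ha, h2]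
  have := hT (Matrix.single i' k 1) (fun x => if x = i' then 1 else 0)
  rw [hb] at this
  have := congrFun (congrFun (congrArg (fun M => (M : Matrix (Fin n) (Fin n) ℂ)) this) i) j
  simpa [matAct, h] using this

open Matrix in
lemma key {n : ℕ} (T : Matrix (Fin n) (Fin n) ℂ →ₗ[ℂ] Matrix (Fin n) (Fin n) ℂ)
    (hT : T ∈ moduleMaps n) (A : Matrix (Fin n) (Fin n) ℂ) (i j : Fin n) :
    T A i j = ∑ k, A i k * T (Matrix.single i k 1) i j := by
  conv_lhs => rw [matrix_eq_sum_single A]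
  have hA : ∀ i' k : Fin n, Matrix.single i' k (A i' k) = A i' k • Matrix.single i' k 1 := by
    intro i' k
    ext a b
    simp only [Matrix.single, Matrix.smul_apply, Matrix.of_apply, smul_eq_mul]
    split <;> simp_all
  simp only [hA, map_sum, LinearMap.map_smul, Matrix.sum_apply]
  have : ∀ i' ∈ Finset.univ (α := Fin n),
      (∑ k, (A i' k • T (Matrix.single i' k 1)) i j)
      = if i' = i then ∑ k, A i k * T (Matrix.single i k 1) i j else 0 := by
    intro i' _
    by_cases h : i' = i
    · subst h; simp [Matrix.smul_apply]
    · rw [Finset.sum_eq_zero]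
      · simp [h]
      · intro k _
        simp [Matrix.smul_apply, row_zero T hT (Ne.symm h)]
  rw [Finset.sum_congr rfl this]
  simp

open Matrix in
noncomputable def myEquiv (n : ℕ) : moduleMaps n ≃ₗ[ℂ] (Fin n × Fin n × Fin n → ℂ) where
  toFun T := fun p => T.1 (Matrix.single p.1 p.2.2 1) p.1 p.2.1
  map_add' T S := by ext p; simp [Matrix.add_apply]
  map_smul' r T := by ext p; simp [Matrix.smul_apply]
  invFun c := ⟨psiMap n c, psi_mem n c⟩
  left_inv T := by
    apply Subtype.ext
    apply LinearMap.ext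
    intro A
    ext i j
    rw [key (T : _) T.2 A i j]
    simp only [psiMap, LinearMap.coe_mk, AddHom.coe_mk, Matrix.of_apply]
    exact Finset.sum_congr rfl fun k _ => by ring
  right_inv c := by
    ext ⟨i, j, k⟩
    simp only [psiMap, LinearMap.coe_mk, AddHom.coe_mk, Matrix.of_apply]
    rw [Finset.sum_eq_single k]
    · simp [Matrix.single]
    · intro b _ hb; simp [Matrix.single, hb, Ne.symm hb]
    · simp

/-- The space of `Dₙ`-module maps on `Mₙ(ℂ)` has dimension `n³` over ℂ. -/
theorem stmt11 (n : ℕ) (hn : 1 ≤ n) :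
    Module.finrank ℂ (moduleMaps n) = n ^ 3 := by
  rw [(myEquiv n).finrank_eq]
  simp [Module.finrank_fintype_fun_eq_card]
  ring
end
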